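/- arXiv:2308.11950 — 5 statements merged into one kernel-verified Lean document; each statement's English description precedes it below -/
import Mathlib

section
/- Let C be a finite nonempty set of colors and k = 2⌈log₂|C|⌉. Then there exists a function dir: {0,1}^{k+1} → C × C such that the following holds. For every finite rooted tree S with leaf set Z (|Z| ≥ 2), every linear order ≼ on Z consistent with S, and every coloring φ of the non-root nodes of S with colors from C, there exist linear orders ≼_1,…,≼_k on Z such that for all distinct x,y ∈ Z: dir([x ≼ y],[x ≼_1 y],…,[x ≼_k y]) = (φ(v), φ(w)), where v and w are the children of the lowest common ancestor of x and y in S such that v is an ancestor-or-equal of x and w is an ancestor-or-equal of y. -/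
/-! ### Poset dimension and Boolean dimension -/

/-- The (Dushnik–Miller) dimension of a poset: the least `d` such that the order
is the intersection of `d` linear orders on `X`. -/
noncomputable def posetDim (X : Type*) [PartialOrder X] : ℕ :=
  sInf {d : ℕ | ∃ L : Fin d → X → X → Prop,
    (∀ i, IsLinearOrder X (L i)) ∧ ∀ x y : X, x ≤ y ↔ ∀ i, L i x y}

/-- `(X,≤)` has a Boolean realizer of size `b`: linear orders `L 0, …, L (b-1)` and a
decoder `f` such that for distinct `x y`, `x ≤ y` iff `f` of the vector of truth values
`L i x y` holds.  Boolean dimension at most `b` is equivalent to this. -/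
def hasBoolRealizer (X : Type*) [PartialOrder X] (b : ℕ) : Prop :=
  ∃ (L : Fin b → X → X → Prop) (f : (Fin b → Prop) → Prop),
    (∀ i, IsLinearOrder X (L i)) ∧
    ∀ x y : X, x ≠ y → (x ≤ y ↔ f (fun i => L i x y))

/-! ### Standard examples -/

/-- The order of the standard example `S_k`: elements `a_i = inl i`, `b_j = inr j`,
with `a_i < b_j` iff `i ≠ j` and no other strict comparabilities. -/
def stdLE (k : ℕ) : Fin k ⊕ Fin k → Fin k ⊕ Fin k → Prop
  | Sum.inl i, Sum.inl j => i = j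
  | Sum.inr i, Sum.inr j => i = j
  | Sum.inl i, Sum.inr j => i ≠ j
  | Sum.inr _, Sum.inl _ => False

/-- `X` contains the standard example `S_k` as a subposet. -/
def ContainsStd (X : Type*) [PartialOrder X] (k : ℕ) : Prop :=
  ∃ φ : Fin k ⊕ Fin k → X, Function.Injective φ ∧
    ∀ p q, stdLE k p q ↔ φ p ≤ φ q

/-! ### Kelly examples -/

/-- Index type for the elements of the Kelly example `𝒦_k`:
`inl (inl j)` is `a_{j+2}`, `inl (inr j)` is `b_{j+2}`,
`inr (inl i)` is `c_{i+1}`, `inr (inr i)` is `d_{i+1}`. -/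
abbrev KellyIdx (k : ℕ) := (Fin (k - 2) ⊕ Fin (k - 2)) ⊕ (Fin (k - 1) ⊕ Fin (k - 1))

/-- Generating strict relations of the Kelly example `𝒦_k` (in actual indices:
`a_2,…,a_i < c_i`; `c_i < b_{i+1},…,b_{k-1}`; `a_{i+1},…,a_{k-1} < d_i`;
`d_i < b_2,…,b_i`; the chains `c_1 < ⋯ < c_{k-1}` and `d_1 > ⋯ > d_{k-1}`). -/
def kellyGen (k : ℕ) : KellyIdx k → KellyIdx k → Prop
  | Sum.inl (Sum.inl j), Sum.inr (Sum.inl i) => (j : ℕ) + 1 ≤ (i : ℕ)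
  | Sum.inr (Sum.inl i), Sum.inl (Sum.inr j) => (i : ℕ) ≤ (j : ℕ)
  | Sum.inl (Sum.inl j), Sum.inr (Sum.inr i) => (i : ℕ) ≤ (j : ℕ)
  | Sum.inr (Sum.inr i), Sum.inl (Sum.inr j) => (j : ℕ) + 1 ≤ (i : ℕ)
  | Sum.inr (Sum.inl i), Sum.inr (Sum.inl i') => (i : ℕ) < (i' : ℕ)
  | Sum.inr (Sum.inr i), Sum.inr (Sum.inr i') => (i' : ℕ) < (i : ℕ)
  | _, _ => False

/-- The order of the Kelly example `𝒦_k`: the reflexive-transitive closure of the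
generating relations. -/
def kellyLE (k : ℕ) : KellyIdx k → KellyIdx k → Prop :=
  Relation.ReflTransGen (kellyGen k)

/-- `X` contains the Kelly example `𝒦_k` as a subposet. -/
def ContainsKelly (X : Type*) [PartialOrder X] (k : ℕ) : Prop :=
  ∃ φ : KellyIdx k → X, Function.Injective φ ∧
    ∀ p q, kellyLE k p q ↔ φ p ≤ φ q

/-! ### Cover graphs, minors, tree decompositions -/

/-- `y` covers `x` with respect to the relation `r`. -/
def coverAdjOf {V : Type*} (r : V → V → Prop) (x y : V) : Prop :=
  x ≠ y ∧ r x y ∧ ∀ z, r x z → r z y → z = x ∨ z = y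

/-- The cover graph of the relation `r` (for a partial order `r`, vertices are joined
iff one covers the other). -/
def coverGraphOf {V : Type*} (r : V → V → Prop) : SimpleGraph V where
  Adj x y := coverAdjOf r x y ∨ coverAdjOf r y x
  symm := ⟨fun _ _ h => Or.symm h⟩
  loopless := ⟨fun _ h => by rcases h with h | h <;> exact h.1 rfl⟩

/-- `H` is a minor of `G`: there is a model of `H` in `G`, i.e. pairwise disjoint
branch sets inducing connected subgraphs, joined by edges of `G` for each edge of `H`. -/
def GraphIsMinor {V W : Type*} (H : SimpleGraph V) (G : SimpleGraph W) : Prop :=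
  ∃ M : V → Set W,
    (∀ x, (G.induce (M x)).Connected) ∧
    (∀ x y, x ≠ y → Disjoint (M x) (M y)) ∧
    (∀ x y, H.Adj x y → ∃ a ∈ M x, ∃ b ∈ M y, G.Adj a b)

/-- A tree decomposition of the graph `G` with nodes `ν`. -/
structure TreeDecomp {V : Type*} (G : SimpleGraph V) (ν : Type*) where
  tree : SimpleGraph ν
  isTree : tree.IsTree
  bag : ν → Set V
  bag_connected : ∀ v : V, (tree.induce {u | v ∈ bag u}).Connected
  bag_edge : ∀ x y : V, G.Adj x y → ∃ u, x ∈ bag u ∧ y ∈ bag u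

/-- `G` has treewidth at most `w`: it has a tree decomposition all of whose bags
have at most `w + 1` elements. -/
def treewidthLE {V : Type*} (G : SimpleGraph V) (w : ℕ) : Prop :=
  ∃ (ν : Type) (td : TreeDecomp G ν), ∀ u, (td.bag u).ncard ≤ w + 1

/-! ### Binary trees via positions -/

/-- A binary tree with leaves labelled by `X`. -/
inductive BTree (X : Type*) where
  | leaf (x : X)
  | node (l r : BTree X)

namespace BTree

/-- The subtree of `t` at position `p` (`false` = go left, `true` = go right). -/
def subtreeAt {X : Type*} : BTree X → List Bool → Option (BTree X)
  | t, [] => some t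
  | leaf _, _ :: _ => none
  | node l r, b :: p => subtreeAt (if b then r else l) p

/-- `p` is a valid position (node) of `t`. -/
def IsPos {X : Type*} (t : BTree X) (p : List Bool) : Prop :=
  (t.subtreeAt p).isSome

/-- `p` is an inner node of `t` (neither the root nor a leaf). -/
def IsInner {X : Type*} (t : BTree X) (p : List Bool) : Prop :=
  p ≠ [] ∧ ∃ l r : BTree X, t.subtreeAt p = some (node l r)

/-- The multiset of leaf labels of `t`. -/
def leaves {X : Type*} : BTree X → Multiset X
  | leaf x => {x}
  | node l r => leaves l + leaves r

end BTree

/-- Longest common prefix of two positions: the position of the lowest common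
ancestor of the two nodes. -/
def lcp : List Bool → List Bool → List Bool
  | a :: as, b :: bs => if a = b then a :: lcp as bs else []
  | _, _ => []

/-! ### NLC-decompositions -/

/-- An NLC-decomposition of the finite poset `(X, ≤)` with label set `Q`:
a binary tree with leaf set exactly `X`, initial labels `init`, relabelings
`rel u v : Q → Q` for `u` a strict ancestor of `v` satisfying the composition law,
and status relations `R`, `R'` encoding the order at lowest common ancestors. -/
structure NLCDecomp (X : Type*) [PartialOrder X] [Fintype X] (Q : Type*) where
  tree : BTree X
  pos : X → List Bool
  pos_spec : ∀ x, tree.subtreeAt (pos x) = some (BTree.leaf x)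
  leaves_eq : tree.leaves = (Finset.univ : Finset X).val
  init : X → Q
  rel : List Bool → List Bool → Q → Q
  rel_comp : ∀ u v w : List Bool, tree.IsPos w →
    u <+: v → u ≠ v → v <+: w → v ≠ w →
    ∀ γ : Q, rel u v (rel v w γ) = rel u w γ
  R : List Bool → Set (Q × Q)
  R' : List Bool → Set (Q × Q)
  encode : ∀ x y : X, x ≠ y →
    (lcp (pos x) (pos y) ++ [false]) <+: pos x →
    (lcp (pos x) (pos y) ++ [true]) <+: pos y →
    ((x ≤ y ↔ (rel (lcp (pos x) (pos y)) (pos x) (init x),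
               rel (lcp (pos x) (pos y)) (pos y) (init y)) ∈ R (lcp (pos x) (pos y))) ∧
     (y ≤ x ↔ (rel (lcp (pos x) (pos y)) (pos y) (init y),
               rel (lcp (pos x) (pos y)) (pos x) (init x)) ∈ R' (lcp (pos x) (pos y))))

namespace NLCDecomp

variable {X Q : Type*} [PartialOrder X] [Fintype X]

/-- The label `ℓ(u,x)` of the leaf `x` at its ancestor `u`. -/
def lab (D : NLCDecomp X Q) (u : List Bool) (x : X) : Q :=
  if u = D.pos x then D.init x else D.rel u (D.pos x) (D.init x)

/-- The set `L≤(x,v)` of labels `γ` such that `x ≤ γ` at `v`, for `x ∉ X(v)`. -/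
def Lle (D : NLCDecomp X Q) (x : X) (v : List Bool) : Set Q :=
  { γ | ((lcp (D.pos x) v ++ [false]) <+: D.pos x ∧
          (D.lab (lcp (D.pos x) v) x, D.rel (lcp (D.pos x) v) v γ) ∈ D.R (lcp (D.pos x) v)) ∨
        (¬ (lcp (D.pos x) v ++ [false]) <+: D.pos x ∧
          (D.rel (lcp (D.pos x) v) v γ, D.lab (lcp (D.pos x) v) x) ∈ D.R' (lcp (D.pos x) v)) }

/-- The set `L≥(x,v)` of labels `γ` such that `x ≥ γ` at `v`, for `x ∉ X(v)`. -/
def Lge (D : NLCDecomp X Q) (x : X) (v : List Bool) : Set Q :=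
  { γ | ((lcp (D.pos x) v ++ [false]) <+: D.pos x ∧
          (D.lab (lcp (D.pos x) v) x, D.rel (lcp (D.pos x) v) v γ) ∈ D.R' (lcp (D.pos x) v)) ∨
        (¬ (lcp (D.pos x) v ++ [false]) <+: D.pos x ∧
          (D.rel (lcp (D.pos x) v) v γ, D.lab (lcp (D.pos x) v) x) ∈ D.R (lcp (D.pos x) v)) }

end NLCDecomp

/-- `X` has NLC-width at most `q`. -/
def nlcWidthLE (X : Type*) [PartialOrder X] [Fintype X] (q : ℕ) : Prop :=
  ∃ m : ℕ, m ≤ q ∧ Nonempty (NLCDecomp X (Fin m))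

/-! ### Splits, h-neighbors, h-chains, h-crosses -/

/-- `u` and `v` are `h`-neighbors with respect to the split `s`. -/
def HNbr {X Q : Type*} [PartialOrder X] [Fintype X] (D : NLCDecomp X Q)
    (s : List Bool → ℕ) (h : ℕ) (u v : List Bool) : Prop :=
  D.tree.IsInner u ∧ D.tree.IsInner v ∧ u <+: v ∧ u ≠ v ∧ s u = h ∧ s v = h ∧
    ∀ w, u <+: w → w <+: v → w ≠ u → w ≠ v → s w ≤ h

/-- `s` is a decent split of order `p`: it maps inner nodes into `[p]` and is
forward Ramseyan with respect to the relabeling assignment of `D`. -/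
def DecentSplit {X Q : Type*} [PartialOrder X] [Fintype X] (D : NLCDecomp X Q)
    (s : List Bool → ℕ) (p : ℕ) : Prop :=
  (∀ u, D.tree.IsInner u → 1 ≤ s u ∧ s u ≤ p) ∧
  (∀ h u v u' v', HNbr D s h u v → HNbr D s h u' v' →
    ∀ γ : Q, D.rel u v (D.rel u' v' γ) = D.rel u v γ)

/-- The set `E_h` of relabelings between `h`-neighbors. -/
def Eh {X Q : Type*} [PartialOrder X] [Fintype X] (D : NLCDecomp X Q)
    (s : List Bool → ℕ) (h : ℕ) : Set (Q → Q) :=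
  { σ | ∃ u v, HNbr D s h u v ∧ σ = D.rel u v }

/-- `A` is an `E_h`-class (an equivalence class of `α ≡_h β ⇔ ∀ σ ∈ E_h, σ α = σ β`). -/
def IsEhClass {X Q : Type*} [PartialOrder X] [Fintype X] (D : NLCDecomp X Q)
    (s : List Bool → ℕ) (h : ℕ) (A : Set Q) : Prop :=
  ∃ α : Q, A = { β : Q | ∀ σ ∈ Eh D s h, σ β = σ α }

/-- `c 0, c 1, …, c ℓ` is an `h`-chain of length `ℓ`: mutual `h`-neighbors,
each a strict ancestor of the next. -/
def IsHChain {X Q : Type*} [PartialOrder X] [Fintype X] (D : NLCDecomp X Q)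
    (s : List Bool → ℕ) (h ℓ : ℕ) (c : ℕ → List Bool) : Prop :=
  ∀ i j : ℕ, i < j → j ≤ ℓ → HNbr D s h (c i) (c j)

/-- There exists an `h`-cross. -/
def HCross {X Q : Type*} [PartialOrder X] [Fintype X] (D : NLCDecomp X Q)
    (s : List Bool → ℕ) (h : ℕ) : Prop :=
  ∃ (u v : List Bool) (x y : X) (σ : Q → Q),
    HNbr D s h u v ∧
    u <+: D.pos x ∧ ¬ v <+: D.pos x ∧
    u <+: D.pos y ∧ ¬ v <+: D.pos y ∧
    ¬ x ≤ y ∧ ¬ y ≤ x ∧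
    σ ∈ Eh D s h ∧
    σ (D.lab u x) ∈ D.Lge y v ∧ σ (D.lab u y) ∈ D.Lle x v

/-! ### Rooted trees (general), consistent orders, semigroup labelings -/

/-- A rooted tree on the node set `ν`, given by its parent function. -/
structure ParentTree (ν : Type*) where
  root : ν
  parent : ν → ν
  parent_root : parent root = root
  reach : ∀ v, ∃ n : ℕ, parent^[n] v = root

namespace ParentTree

/-- `u` is an ancestor of `v` (allowing `u = v`). -/
def Anc {ν : Type*} (T : ParentTree ν) (u v : ν) : Prop :=
  ∃ n : ℕ, T.parent^[n] v = u

/-- `v` is a leaf of `T`. -/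
def IsLeaf {ν : Type*} (T : ParentTree ν) (v : ν) : Prop :=
  ∀ w, T.parent w = v → w = v

/-- `u` is the lowest common ancestor of `x` and `y`. -/
def IsLCA {ν : Type*} (T : ParentTree ν) (u x y : ν) : Prop :=
  T.Anc u x ∧ T.Anc u y ∧ ∀ w, T.Anc w x → T.Anc w y → T.Anc w u

end ParentTree

/-- The linear order `r` on the leaf set (through `ι : Z → ν`) is consistent with the
tree `T`: the leaves below any node form a contiguous interval of `r`. -/
def ConsistentOrder {ν Z : Type*} (T : ParentTree ν) (ι : Z → ν) (r : Z → Z → Prop) : Prop :=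
  IsLinearOrder Z r ∧ ∀ u : ν, ∀ a b c : Z, r a b → r b c →
    T.Anc u (ι a) → T.Anc u (ι c) → T.Anc u (ι b)

/-- `lam` is a `(Λ,·)`-labeling of the rooted tree `T`. -/
def SGLabeling {ν Λ : Type*} [Mul Λ] (T : ParentTree ν) (lam : ν → ν → Λ) : Prop :=
  ∀ u v w, T.Anc u v → u ≠ v → T.Anc v w → v ≠ w → lam u v * lam v w = lam u w

/-! ### Rooted (binary) tree decompositions -/

/-- A tree decomposition of `G` over a binary tree whose leaf set is exactly the
vertex set of `G`; nodes are positions, bags are attached to positions, and the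
connectivity condition is expressed via paths in the tree. -/
structure BTreeDecomp (X : Type*) [Fintype X] (G : SimpleGraph X) where
  tree : BTree X
  pos : X → List Bool
  pos_spec : ∀ x, tree.subtreeAt (pos x) = some (BTree.leaf x)
  leaves_eq : tree.leaves = (Finset.univ : Finset X).val
  bag : List Bool → Set X
  bag_nonempty : ∀ x : X, ∃ p, tree.IsPos p ∧ x ∈ bag p
  bag_path : ∀ x : X, ∀ p q r : List Bool, tree.IsPos p → tree.IsPos q →
    x ∈ bag p → x ∈ bag q → lcp p q <+: r → (r <+: p ∨ r <+: q) → x ∈ bag r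
  bag_edge : ∀ x y : X, G.Adj x y → ∃ p, tree.IsPos p ∧ x ∈ bag p ∧ y ∈ bag p

/-! ### Alternating cycles -/

/-- `(x 0, y 0), …, (x (m-1), y (m-1))` is a (strict) alternating cycle:
the pairs are incomparable, `x i ≤ y (i+1 mod m)`, and these are the only
comparabilities among the listed elements. -/
def IsAltCycle {X : Type*} [PartialOrder X] (m : ℕ) (x y : ℕ → X) : Prop :=
  2 ≤ m ∧
  (∀ i < m, ¬ x i ≤ y i ∧ ¬ y i ≤ x i) ∧
  (∀ i < m, x i ≤ y ((i + 1) % m)) ∧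
  (∀ i < m, ∀ j < m, x i ≤ y j → j = (i + 1) % m) ∧
  (∀ i < m, ∀ j < m, x i ≤ x j → x i = x j) ∧
  (∀ i < m, ∀ j < m, y i ≤ y j → y i = y j) ∧
  (∀ i < m, ∀ j < m, y i ≤ x j → y i = x j)

/-!
Write each colour as `m = ⌈log₂ |C|⌉` bits. Ordering the children of every node induces a
linear order on the leaves: compare `x` and `y` as the children `v`, `w` of their lowest common
ancestor are ordered. The given order `≼` is of this kind, since it is consistent with the tree.
For each bit `j` and each `c ∈ {0, 1}`, reorder the children by putting those whose `j`-th bit is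
`c` first, keeping `≼` among children with bit `0` and reversing it among children with bit `1`.
Knowing `[x ≼ y]`, the answers of the two orders for `c = 0, 1` determine the `j`-th bits of the
colours of `v` and `w`.
-/

namespace ParentTree

variable {ν Z : Type*} {S : ParentTree ν} {ι : Z → ν} {p q t u v w a : ν}

def IsChild (S : ParentTree ν) (v u : ν) : Prop :=
  S.parent v = u ∧ v ≠ u

/-- `v` and `w` are the two distinct children of the lowest common ancestor of `p` and `q`
lying above `p` and `q` respectively. -/
structure IsFork (S : ParentTree ν) (p q v w : ν) : Prop where
  isChild_left : S.IsChild v (S.parent v)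
  isChild_right : S.IsChild w (S.parent v)
  ne : v ≠ w
  anc_left : S.Anc v p
  anc_right : S.Anc w q

theorem anc_refl (S : ParentTree ν) (v : ν) : S.Anc v v :=
  ⟨0, rfl⟩

theorem anc_parent (S : ParentTree ν) (v : ν) : S.Anc (S.parent v) v :=
  ⟨1, rfl⟩

theorem Anc.trans (h₁ : S.Anc u v) (h₂ : S.Anc v w) : S.Anc u w := by
  obtain ⟨n, rfl⟩ := h₁
  obtain ⟨m, rfl⟩ := h₂
  exact ⟨n + m, Function.iterate_add_apply _ _ _ _⟩

theorem IsChild.anc (h : S.IsChild v u) : S.Anc u v :=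
  h.1 ▸ S.anc_parent v

/-- A cycle of the parent map through `u` could never reach the root unless `u` is the root. -/
theorem Anc.antisymm (h₁ : S.Anc u v) (h₂ : S.Anc v u) : u = v := by
  obtain ⟨n, rfl⟩ := h₁
  obtain ⟨m, hm⟩ := h₂
  rcases Nat.eq_zero_or_pos n with rfl | hn
  · rfl
  have hper : Function.IsPeriodicPt S.parent (n + m) v := by
    rw [Function.IsPeriodicPt, Function.IsFixedPt, add_comm, Function.iterate_add_apply, hm]
  obtain ⟨k, hk⟩ := S.reach v
  have hroot : v = S.root := by
    have hk' : k ≤ (n + m) * k := Nat.le_mul_of_pos_left k (by omega)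
    rw [← (hper.mul_const k).eq, ← Nat.sub_add_cancel hk', Function.iterate_add_apply, hk,
      Function.iterate_fixed S.parent_root]
  rw [hroot, Function.iterate_fixed S.parent_root]

theorem Anc.total (ha : S.Anc a p) (hb : S.Anc b p) : S.Anc a b ∨ S.Anc b a := by
  obtain ⟨n, rfl⟩ := ha
  obtain ⟨m, rfl⟩ := hb
  rcases le_total n m with h | h
  · exact .inr ⟨m - n, by rw [← Function.iterate_add_apply, Nat.sub_add_cancel h]⟩
  · exact .inl ⟨n - m, by rw [← Function.iterate_add_apply, Nat.sub_add_cancel h]⟩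

theorem IsLeaf.eq_of_anc (hl : S.IsLeaf v) (h : S.Anc v w) : w = v := by
  obtain ⟨n, hn⟩ := h
  induction n generalizing w with
  | zero => exact hn
  | succ n ih => exact hl w (ih (Function.iterate_succ_apply _ _ _ ▸ hn))

theorem exists_isChild_of_anc (h : S.Anc u p) (hne : u ≠ p) : ∃ v, S.IsChild v u ∧ S.Anc v p := by
  classical
  have hex : ∃ n, S.parent^[n] p = u := h
  obtain ⟨k, hk⟩ : ∃ k, Nat.find hex = k + 1 :=
    Nat.exists_eq_add_one.mpr (Nat.pos_of_ne_zero fun h0 => hne (h0 ▸ Nat.find_spec hex).symm)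
  have hspec := Nat.find_spec hex
  rw [hk, Function.iterate_succ_apply'] at hspec
  refine ⟨S.parent^[k] p, ⟨hspec, fun h => ?_⟩, k, rfl⟩
  have := Nat.find_min' hex h
  omega

theorem IsChild.eq_of_anc (hv : S.IsChild v u) (hw : S.IsChild w u) (h : S.Anc v w) : v = w := by
  obtain ⟨_ | k, hk⟩ := h
  · exact hk.symm
  rw [Function.iterate_succ_apply, hw.1] at hk
  exact absurd (Anc.antisymm ⟨k, hk⟩ hv.anc) hv.2

theorem IsChild.eq_of_anc_of_anc (hv : S.IsChild v u) (hw : S.IsChild w u)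
    (hvp : S.Anc v p) (hwp : S.Anc w p) : v = w :=
  (hvp.total hwp).elim (hv.eq_of_anc hw) fun h => (hw.eq_of_anc hv h).symm

theorem IsChild.anc_of_anc (hw : S.IsChild w u) (hwp : S.Anc w p) (hap : S.Anc a p)
    (hua : S.Anc u a) (hne : u ≠ a) : S.Anc w a := by
  obtain ⟨c, hc, hca⟩ := exists_isChild_of_anc hua hne
  exact hc.eq_of_anc_of_anc hw (hca.trans hap) hwp ▸ hca

theorem IsLCA.unique {u' : ν} (hu : S.IsLCA u p q) (hu' : S.IsLCA u' p q) : u = u' :=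
  (hu'.2.2 u hu.1 hu.2.1).antisymm (hu.2.2 u' hu'.1 hu'.2.1)

/-- The lowest common ancestor is the first ancestor of `p`, going up, that lies above `q`. -/
theorem exists_isLCA (S : ParentTree ν) (p q : ν) : ∃ u, S.IsLCA u p q := by
  classical
  have hex : ∃ n, S.Anc (S.parent^[n] p) q := by
    obtain ⟨n, hn⟩ := S.reach p
    exact ⟨n, hn ▸ S.reach q⟩
  refine ⟨_, ⟨_, rfl⟩, Nat.find_spec hex, ?_⟩
  rintro _ ⟨k, rfl⟩ haq
  refine ⟨k - Nat.find hex, ?_⟩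
  rw [← Function.iterate_add_apply, Nat.sub_add_cancel (Nat.find_min' hex haq)]

theorem IsLCA.isFork (hu : S.IsLCA u p q) (hv : S.IsChild v u) (hw : S.IsChild w u)
    (hvp : S.Anc v p) (hwq : S.Anc w q) : S.IsFork p q v w := by
  obtain rfl := hv.1
  refine ⟨hv, hw, ?_, hvp, hwq⟩
  rintro rfl
  exact hv.2 ((hu.2.2 v hvp hwq).antisymm hv.anc)

theorem IsFork.symm (h : S.IsFork p q v w) : S.IsFork q p w v :=
  ⟨h.isChild_right.1 ▸ h.isChild_right, h.isChild_right.1 ▸ h.isChild_left, h.ne.symm,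
    h.anc_right, h.anc_left⟩

theorem IsFork.not_anc (h : S.IsFork p q v w) (hvt : S.Anc v t) : ¬ S.Anc w t := fun hwt =>
  h.ne (h.isChild_left.eq_of_anc_of_anc h.isChild_right hvt hwt)

theorem IsFork.isLCA (h : S.IsFork p q v w) : S.IsLCA (S.parent v) p q := by
  have hup := h.isChild_left.anc.trans h.anc_left
  refine ⟨hup, h.isChild_right.anc.trans h.anc_right, fun a hap haq => ?_⟩
  rcases hap.total hup with hau | hua
  · exact hau
  by_contra hne
  have hne' : S.parent v ≠ a := fun h' => hne (h' ▸ anc_refl S _)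
  exact h.not_anc (h.isChild_left.anc_of_anc h.anc_left hap hua hne')
    (h.isChild_right.anc_of_anc h.anc_right haq hua hne')

theorem IsFork.unique {v' w' : ν} (h : S.IsFork p q v w) (h' : S.IsFork p q v' w') :
    v = v' ∧ w = w' := by
  have hu := h.isLCA.unique h'.isLCA
  have hv' := hu ▸ h'.isChild_left
  have hw' := hu ▸ h'.isChild_right
  exact ⟨h.isChild_left.eq_of_anc_of_anc hv' h.anc_left h'.anc_left,
    h.isChild_right.eq_of_anc_of_anc hw' h.anc_right h'.anc_right⟩

theorem exists_isFork (hp : S.IsLeaf p) (hq : S.IsLeaf q) (hpq : p ≠ q) :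
    ∃ v w, S.IsFork p q v w := by
  obtain ⟨u, hu⟩ := S.exists_isLCA p q
  have hup : u ≠ p := by rintro rfl; exact hpq (hp.eq_of_anc hu.2.1).symm
  have huq : u ≠ q := by rintro rfl; exact hpq (hq.eq_of_anc hu.1)
  obtain ⟨v, hv, hvp⟩ := exists_isChild_of_anc hu.1 hup
  obtain ⟨w, hw, hwq⟩ := exists_isChild_of_anc hu.2.1 huq
  exact ⟨v, w, hu.isFork hv hw hvp hwq⟩

structure IsBranchOrder (S : ParentTree ν) (ι : Z → ν) (s : ν → ν → Prop) : Prop where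
  asymm {x y : Z} {v w : ν} : S.IsFork (ι x) (ι y) v w → s v w → ¬ s w v
  total {x y : Z} {v w : ν} : S.IsFork (ι x) (ι y) v w → s v w ∨ s w v
  trans {x y z : Z} {u v w : ν} : S.IsFork (ι x) (ι y) u v → S.IsFork (ι y) (ι z) v w →
    S.IsFork (ι x) (ι z) u w → s u v → s v w → s u w

def leafLex (S : ParentTree ν) (ι : Z → ν) (s : ν → ν → Prop) (x y : Z) : Prop :=
  x = y ∨ ∃ v w, S.IsFork (ι x) (ι y) v w ∧ s v w

theorem leafLex_iff {s : ν → ν → Prop} {x y : Z} {v w : ν} (hxy : x ≠ y)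
    (h : S.IsFork (ι x) (ι y) v w) : S.leafLex ι s x y ↔ s v w := by
  refine ⟨?_, fun hs => .inr ⟨v, w, h, hs⟩⟩
  rintro (rfl | ⟨v', w', h', hs⟩)
  · exact absurd rfl hxy
  · obtain ⟨rfl, rfl⟩ := h'.unique h
    exact hs

theorem IsBranchOrder.leafLex_trans {s : ν → ν → Prop} (hs : S.IsBranchOrder ι s)
    {x y z : Z} (hxy : S.leafLex ι s x y) (hyz : S.leafLex ι s y z) : S.leafLex ι s x z := by
  obtain rfl | ⟨v₁, w₁, h₁, hs₁⟩ := hxy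
  · exact hyz
  obtain rfl | ⟨v₂, w₂, h₂, hs₂⟩ := hyz
  · exact .inr ⟨v₁, w₁, h₁, hs₁⟩
  have hu₁y := h₁.isChild_right.anc.trans h₁.anc_right
  have hu₂y := h₂.isChild_left.anc.trans h₂.anc_left
  by_cases hu : S.parent v₁ = S.parent v₂
  · have hv₂ : S.IsChild v₂ (S.parent v₁) := hu ▸ h₂.isChild_left
    have hw₂ : S.IsChild w₂ (S.parent v₁) := hu ▸ h₂.isChild_right
    obtain rfl := h₁.isChild_right.eq_of_anc_of_anc hv₂ h₁.anc_right h₂.anc_left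
    by_cases hvw : v₁ = w₂
    · subst hvw
      exact absurd hs₁ (hs.asymm h₂ hs₂)
    have h₃ : S.IsFork (ι x) (ι z) v₁ w₂ :=
      ⟨h₁.isChild_left, hw₂, hvw, h₁.anc_left, h₂.anc_right⟩
    exact .inr ⟨v₁, w₂, h₃, hs.trans h₁ h₂ h₃ hs₁ hs₂⟩
  rcases hu₁y.total hu₂y with h | h
  · have hw₁z := (h₁.isChild_right.anc_of_anc h₁.anc_right hu₂y h hu).trans
      (h₂.isChild_right.anc.trans h₂.anc_right)
    exact .inr ⟨v₁, w₁, { h₁ with anc_right := hw₁z }, hs₁⟩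
  · have hv₂x := (h₂.isChild_left.anc_of_anc h₂.anc_left hu₁y h (Ne.symm hu)).trans
      (h₁.isChild_left.anc.trans h₁.anc_left)
    exact .inr ⟨v₂, w₂, { h₂ with anc_left := hv₂x }, hs₂⟩

theorem IsBranchOrder.isLinearOrder_leafLex {s : ν → ν → Prop} (hs : S.IsBranchOrder ι s)
    (hι : Function.Injective ι) (hleaf : ∀ x, S.IsLeaf (ι x)) :
    IsLinearOrder Z (S.leafLex ι s) where
  refl _ := .inl rfl
  trans _ _ _ := hs.leafLex_trans
  antisymm x y hxy hyx := by
    by_contra hne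
    obtain ⟨_, _, h, hvw⟩ := hxy.resolve_left hne
    exact hs.asymm h hvw ((leafLex_iff (Ne.symm hne) h.symm).mp hyx)
  total x y := by
    by_cases hxy : x = y
    · exact .inl (.inl hxy)
    obtain ⟨v, w, h⟩ := exists_isFork (hleaf x) (hleaf y) (hι.ne hxy)
    exact (hs.total h).imp (fun hvw => .inr ⟨v, w, h, hvw⟩) fun hwv => .inr ⟨w, v, h.symm, hwv⟩

def branchOrder (S : ParentTree ν) (ι : Z → ν) (r : Z → Z → Prop) (v w : ν) : Prop :=
  ∃ x y, S.Anc v (ι x) ∧ S.Anc w (ι y) ∧ r x y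

end ParentTree

namespace ConsistentOrder

open ParentTree

variable {ν Z : Type*} {S : ParentTree ν} {ι : Z → ν} {r : Z → Z → Prop}

/-- A leaf of one branch squeezed between two leaves of a sibling branch would lie in both. -/
theorem of_isFork (hr : ConsistentOrder S ι r) {a b x y : Z} {v w : ν}
    (h : S.IsFork (ι a) (ι b) v w) (hvx : S.Anc v (ι x)) (hwy : S.Anc w (ι y)) (hab : r a b) :
    r x y := by
  have := hr.1
  rcases total_of r x y with hxy | hyx
  · exact hxy
  rcases total_of r a y with hay | hya
  · exact absurd (hr.2 v a y x hay hyx h.anc_left hvx) (h.symm.not_anc hwy)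
  · exact absurd (hr.2 w y a b hya hab hwy h.anc_right) (h.not_anc h.anc_left)

theorem branchOrder_iff (hr : ConsistentOrder S ι r) {x y : Z} {v w : ν}
    (h : S.IsFork (ι x) (ι y) v w) : S.branchOrder ι r v w ↔ r x y :=
  ⟨fun ⟨_, _, hva, hwb, hab⟩ =>
      hr.of_isFork { h with anc_left := hva, anc_right := hwb } h.anc_left h.anc_right hab,
    fun hxy => ⟨x, y, h.anc_left, h.anc_right, hxy⟩⟩

theorem isBranchOrder (hr : ConsistentOrder S ι r) : S.IsBranchOrder ι (S.branchOrder ι r) := by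
  have := hr.1
  refine ⟨fun h hvw hwv => ?_, fun h => ?_, fun h₁ h₂ h₃ huv hvw => ?_⟩
  · rw [hr.branchOrder_iff h] at hvw
    rw [hr.branchOrder_iff h.symm] at hwv
    exact h.not_anc h.anc_left (antisymm hwv hvw ▸ h.anc_right)
  · rw [hr.branchOrder_iff h, hr.branchOrder_iff h.symm]
    exact total_of r _ _
  · rw [hr.branchOrder_iff h₁] at huv
    rw [hr.branchOrder_iff h₂] at hvw
    exact (hr.branchOrder_iff h₃).mpr (_root_.trans huv hvw)

end ConsistentOrder

def bitReorder {ν : Type*} (b : ν → Bool) (c : Bool) (s : ν → ν → Prop) (v w : ν) : Prop :=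
  if b v = b w then (if b v then s w v else s v w) else b v = c

theorem ParentTree.IsBranchOrder.bitReorder {ν Z : Type*} {S : ParentTree ν} {ι : Z → ν}
    {s : ν → ν → Prop} (hs : S.IsBranchOrder ι s) (b : ν → Bool) (c : Bool) :
    S.IsBranchOrder ι (bitReorder b c s) := by
  refine ⟨fun {_ _ v w} h => ?_, fun {_ _ v w} h => ?_, fun {_ _ _ u v w} h₁ h₂ h₃ => ?_⟩
  · have := hs.asymm h
    have := hs.asymm h.symm
    unfold _root_.bitReorder
    cases b v <;> cases b w <;> simp_all
  · have := hs.total h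
    unfold _root_.bitReorder
    cases b v <;> cases b w <;> simp_all [or_comm]
  · have := hs.trans h₁ h₂ h₃
    have := hs.trans h₂.symm h₁.symm h₃.symm
    unfold _root_.bitReorder
    cases b u <;> cases b v <;> cases b w <;> cases c <;> simp_all

/-- Decoding of the two bits `(b v, b w)` at a fork from `[x ≼ y]` and the two comparisons
`ℓ c = [x ≼_c y]`, `c : Bool`, made by the orders `leafLex (bitReorder b c _)`. -/
noncomputable def forkBits (s : Prop) (ℓ : Bool → Prop) : Bool × Bool :=
  open Classical in
  (if s then !decide (ℓ false) else decide (ℓ true),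
    if s then !decide (ℓ true) else decide (ℓ false))

theorem forkBits_eq {s t : Prop} (hts : t ↔ ¬ s) {bv bw : Bool} {ℓ : Bool → Prop}
    (hℓ : ∀ c, ℓ c ↔ if bv = bw then (if bv then t else s) else bv = c) :
    forkBits s ℓ = (bv, bw) := by
  simp only [forkBits, hℓ, hts]
  cases bv <;> cases bw <;> by_cases s <;> simp [*]

theorem color_detection (C : Type) [Fintype C] [Nonempty C] :
    ∃ dir : Prop → (Fin (2 * Nat.clog 2 (Fintype.card C)) → Prop) → C × C,
      ∀ (ν : Type) [Fintype ν] (S : ParentTree ν) (Z : Type) [Fintype Z] (ι : Z → ν),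
        Function.Injective ι → (∀ v, S.IsLeaf v ↔ ∃ z, ι z = v) →
        2 ≤ Fintype.card Z →
        ∀ r : Z → Z → Prop, ConsistentOrder S ι r →
        ∀ φ : ν → C,
        ∃ L : Fin (2 * Nat.clog 2 (Fintype.card C)) → Z → Z → Prop,
          (∀ i, IsLinearOrder Z (L i)) ∧
          ∀ x y : Z, x ≠ y →
            ∀ u v w : ν, S.IsLCA u (ι x) (ι y) →
              S.parent v = u → v ≠ u → S.Anc v (ι x) →
              S.parent w = u → w ≠ u → S.Anc w (ι y) →
              dir (r x y) (fun i => L i x y) = (φ v, φ w) := by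
  obtain ⟨enc⟩ : Nonempty (C ↪ (Fin (Nat.clog 2 (Fintype.card C)) → Bool)) :=
    Function.Embedding.nonempty_of_card_le (by simpa using Nat.le_pow_clog one_lt_two _)
  let e : Bool × Fin (Nat.clog 2 (Fintype.card C)) ≃ Fin (2 * Nat.clog 2 (Fintype.card C)) :=
    Fintype.equivFinOfCardEq (by simp)
  refine ⟨fun s ℓ => (Function.invFun enc fun j => (forkBits s fun c => ℓ (e (c, j))).1,
    Function.invFun enc fun j => (forkBits s fun c => ℓ (e (c, j))).2), ?_⟩
  intro ν _ S Z _ ι hι hleaf _ r hr φ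
  let L i := S.leafLex ι
    (bitReorder (fun n => enc (φ n) (e.symm i).2) (e.symm i).1 (S.branchOrder ι r))
  refine ⟨L, fun i => (hr.isBranchOrder.bitReorder _ _).isLinearOrder_leafLex hι
    fun x => (hleaf _).2 ⟨x, rfl⟩, ?_⟩
  intro x y hxy u v w hu hvu hv hvx hwu hw hwy
  have hfork := hu.isFork ⟨hvu, hv⟩ ⟨hwu, hw⟩ hvx hwy
  have hyx : r y x ↔ ¬ r x y := by
    have := hr.1
    exact ⟨fun h h' => hxy (antisymm h' h), (total_of r x y).resolve_left⟩
  have hbits (j) :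
      forkBits (r x y) (fun c => L (e (c, j)) x y) = (enc (φ v) j, enc (φ w) j) :=
    forkBits_eq hyx fun c => by
      simp only [L, Equiv.symm_apply_apply, ParentTree.leafLex_iff hxy hfork, bitReorder,
        hr.branchOrder_iff hfork, hr.branchOrder_iff hfork.symm]
  simp only [hbits, Function.leftInverse_invFun enc.injective _]
end

section
/- Let (X,≤) be a finite poset, let (T,B) be a tree decomposition of the cover graph of (X,≤), and let u, v, w be nodes of T such that w lies on the path from u to v in T. If x ∈ B(u), y ∈ B(v), and x ≤ y, then there is z ∈ B(w) such that x ≤ z ≤ y. -/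
/-!
A covering chain `x = a₀ ⋖ a₁ ⋖ ⋯ ⋖ aₙ = y` is a walk in the cover graph all of whose vertices
lie in `[x, y]`. In any tree decomposition of any graph, a node `w` on the `u`–`v` path of the tree
separates bag `u` from bag `v`, so this walk meets bag `w`.
-/

namespace SimpleGraph

variable {V : Type*} {G : SimpleGraph V}

lemma IsAcyclic.support_subset_support_of_isPath (hG : G.IsAcyclic) {u v : V}
    {p : G.Walk u v} (hp : p.IsPath) (c : G.Walk u v) : p.support ⊆ c.support := by
  classical
  have hpc : (⟨p, hp⟩ : G.Path u v) = c.toPath := (hG.subsingleton_path u v).elim _ _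
  rw [show p = c.toPath.1 from congrArg Subtype.val hpc]
  exact c.support_toPath_subset_support

lemma exists_walk_support_subset_of_connected_induce {S : Set V} (hS : (G.induce S).Connected)
    {u v : V} (hu : u ∈ S) (hv : v ∈ S) : ∃ c : G.Walk u v, ∀ w ∈ c.support, w ∈ S := by
  obtain ⟨q⟩ := hS ⟨u, hu⟩ ⟨v, hv⟩
  refine ⟨q.map (Embedding.induce S).toHom, fun w hw => ?_⟩
  obtain ⟨⟨w, hwS⟩, -, rfl⟩ := List.mem_map.mp (q.support_map (Embedding.induce S).toHom ▸ hw)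
  exact hwS

end SimpleGraph

namespace TreeDecomp

open SimpleGraph

variable {V ν : Type*} {G : SimpleGraph V}

/-- If the walk leaves `x` through an edge covered by bag `t` and `w ∉ bag x`, then `w` also
separates `t` from `v`: bag `x` joins `u` to `t` without passing through `w`. -/
lemma exists_mem_support_mem_bag (td : TreeDecomp G ν) {x y : V} (W : G.Walk x y) {u v w : ν}
    (hx : x ∈ td.bag u) (hy : y ∈ td.bag v) (hw : ∀ c : td.tree.Walk u v, w ∈ c.support) :
    ∃ z ∈ W.support, z ∈ td.bag w := by
  induction W generalizing u with
  | nil =>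
    obtain ⟨c, hc⟩ := exists_walk_support_subset_of_connected_induce (td.bag_connected _) hx hy
    exact ⟨_, Walk.start_mem_support _, hc w (hw c)⟩
  | @cons x a y hxa W ih =>
    by_cases hxw : x ∈ td.bag w
    · exact ⟨x, Walk.start_mem_support _, hxw⟩
    obtain ⟨t, hxt, hat⟩ := td.bag_edge x a hxa
    obtain ⟨c₁, hc₁⟩ := exists_walk_support_subset_of_connected_induce (td.bag_connected x) hx hxt
    have hw' (c₂ : td.tree.Walk t v) : w ∈ c₂.support := by
      have := hw (c₁.append c₂)
      rw [Walk.mem_support_append_iff] at this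
      exact this.resolve_left fun h => hxw (hc₁ w h)
    obtain ⟨z, hzW, hzw⟩ := ih hat hy hw'
    exact ⟨z, List.mem_cons_of_mem x hzW, hzw⟩

end TreeDecomp

lemma CovBy.coverGraphOf_adj {X : Type*} [PartialOrder X] {a b : X} (h : a ⋖ b) :
    (coverGraphOf ((· ≤ ·) : X → X → Prop)).Adj a b :=
  Or.inl ⟨h.ne, h.le, fun z haz hzb => by
    by_contra! hz
    exact h.2 (haz.lt_of_ne hz.1.symm) (hzb.lt_of_ne hz.2)⟩

lemma exists_walk_coverGraphOf_support_subset_Icc {X : Type*} [PartialOrder X]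
    [LocallyFiniteOrder X] {x y : X} (hxy : x ≤ y) :
    ∃ W : (coverGraphOf ((· ≤ ·) : X → X → Prop)).Walk x y, ∀ z ∈ W.support, x ≤ z ∧ z ≤ y := by
  induction le_iff_reflTransGen_covBy.mp hxy using Relation.ReflTransGen.head_induction_on with
  | refl => exact ⟨.nil, by simp⟩
  | @head a b hab hby ih =>
    obtain ⟨W, hW⟩ := ih (le_iff_reflTransGen_covBy.mpr hby)
    refine ⟨.cons hab.coverGraphOf_adj W, fun z hz => ?_⟩
    rcases List.mem_cons.mp hz with rfl | hz
    · exact ⟨le_rfl, hab.le.trans (le_iff_reflTransGen_covBy.mpr hby)⟩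
    · exact ⟨hab.le.trans (hW z hz).1, (hW z hz).2⟩

theorem tree_decomp_convexity (X : Type) [PartialOrder X] [Fintype X] (ν : Type)
    (td : TreeDecomp (coverGraphOf ((· ≤ ·) : X → X → Prop)) ν)
    (u v w : ν)
    (hw : ∃ p : td.tree.Walk u v, p.IsPath ∧ w ∈ p.support)
    (x y : X) (hx : x ∈ td.bag u) (hy : y ∈ td.bag v) (hxy : x ≤ y) :
    ∃ z ∈ td.bag w, x ≤ z ∧ z ≤ y := by
  classical
  let : LocallyFiniteOrder X := Fintype.toLocallyFiniteOrder
  obtain ⟨p, hp, hwp⟩ := hw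
  obtain ⟨W, hW⟩ := exists_walk_coverGraphOf_support_subset_Icc hxy
  obtain ⟨z, hzW, hzw⟩ := td.exists_mem_support_mem_bag W hx hy fun c =>
    td.isTree.isAcyclic.support_subset_support_of_isPath hp c hwp
  exact ⟨z, hzw, hW z hzW⟩
end

section
/- For every integer t ≥ 1, every finite poset whose cover graph has treewidth at most t−1 has NLC-width at most 4^t. -/
/-!
Recursively over the tree decomposition, lay the elements out as the leaves of a binary tree.
At a node `c`, the elements of the bag of `c` become leaves, the elements whose bags all lie
behind a neighbour `d` of `c` are laid out recursively in the branch of `d`, and all these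
pieces are joined by binary nodes carrying the separator `bag c`. Every comparability is a
chain of cover relations, each lying in a bag, so a comparability between an element at a
binary node and one below it, or between leaves split at a node, passes through the separator
of the lower node, respectively of the splitting node; separators have at most `t` elements.
The label of a leaf `x` at an ancestor `u` is then the pair (elements of the separator at `u`
below `x`, elements above `x`): there are at most `2^t * 2^t = 4^t` of them, the label at `u`
is computable from the label at any descendant, and `x ≤ y` for leaves split at `u` holds
iff the up-set of `x` meets the down-set of `y` in the separator at `u`.
-/

namespace SimpleGraph

variable {ν : Type*} {T : SimpleGraph ν} {c d β γ : ν}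

/-- For an edge `cd` of a tree, the vertices on the `d` side of the edge. -/
def side (T : SimpleGraph ν) (c d : ν) : Set ν :=
  {β | ∃ w : T.Walk d β, c ∉ w.support}

lemma mem_side_self (hcd : T.Adj c d) : d ∈ T.side c d :=
  ⟨.nil, by simpa using hcd.ne⟩

lemma notMem_side_left : c ∉ T.side c d :=
  fun ⟨w, hw⟩ => hw w.end_mem_support

lemma mem_side_of_walk (hβ : β ∈ T.side c d) (w : T.Walk β γ) (hw : c ∉ w.support) :
    γ ∈ T.side c d := by
  obtain ⟨w₀, hw₀⟩ := hβ
  exact ⟨w₀.append w, by simp [Walk.mem_support_append_iff, hw₀, hw]⟩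

lemma exists_isPath_cons_of_mem_side (hcd : T.Adj c d) (hβ : β ∈ T.side c d) :
    ∃ q : T.Walk d β, (Walk.cons hcd q).IsPath := by
  classical
  obtain ⟨w, hw⟩ := hβ
  exact ⟨w.bypass, w.bypass_isPath.cons fun h => hw (w.support_bypass_subset_support h)⟩

lemma exists_adj_mem_side (hT : T.Connected) (hβ : β ≠ c) :
    ∃ d, T.Adj c d ∧ β ∈ T.side c d := by
  obtain ⟨w, hw, -⟩ := (hT c β).exists_path_of_dist
  cases w with
  | nil => exact absurd rfl hβ
  | cons hcd q => exact ⟨_, hcd, q, ((Walk.cons_isPath_iff _ _).mp hw).2⟩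

namespace IsAcyclic

lemma eq_of_mem_side (hT : T.IsAcyclic) {d₁ d₂ : ν} (h₁ : T.Adj c d₁) (h₂ : T.Adj c d₂)
    (hβ₁ : β ∈ T.side c d₁) (hβ₂ : β ∈ T.side c d₂) : d₁ = d₂ := by
  obtain ⟨q₁, hq₁⟩ := exists_isPath_cons_of_mem_side h₁ hβ₁
  obtain ⟨q₂, hq₂⟩ := exists_isPath_cons_of_mem_side h₂ hβ₂
  simpa using congrArg (fun p : T.Path c β => p.1.snd)
    ((hT.subsingleton_path c β).elim ⟨_, hq₁⟩ ⟨_, hq₂⟩)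

lemma disjoint_side_swap (hT : T.IsAcyclic) (hcd : T.Adj c d) :
    Disjoint (T.side c d) (T.side d c) := by
  classical
  refine Set.disjoint_left.mpr fun β hβ hβ' => ?_
  obtain ⟨q, hq⟩ := exists_isPath_cons_of_mem_side hcd hβ
  obtain ⟨w, hw⟩ := hβ'
  have := congrArg (fun p : T.Path c β => d ∈ p.1.support)
    ((hT.subsingleton_path c β).elim ⟨_, hq⟩ ⟨w.bypass, w.bypass_isPath⟩)
  simp only [Walk.support_cons, List.mem_cons, Walk.start_mem_support, or_true,
    eq_iff_iff, true_iff] at this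
  exact hw (w.support_bypass_subset_support this)

lemma side_subset_side (hT : T.IsAcyclic) {p : ν} (hpc : T.Adj p c) (hcd : T.Adj c d)
    (hdp : d ≠ p) : T.side c d ⊆ T.side p c := by
  classical
  intro β hβ
  obtain ⟨q, hq⟩ := exists_isPath_cons_of_mem_side hcd hβ
  refine ⟨Walk.cons hcd q, fun hp => ?_⟩
  have hpq : p ∈ q.support := by simpa [hpc.ne] using hp
  have hc : c ∉ q.support := ((Walk.cons_isPath_iff _ _).mp hq).2
  have hpd : p ∈ T.side c d :=
    ⟨q.takeUntil p hpq, fun h => hc (q.support_takeUntil_subset_support hpq h)⟩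
  exact hdp (hT.eq_of_mem_side hcd hpc.symm hpd (mem_side_self hpc.symm))

end IsAcyclic

lemma IsTree.dist_lt_of_mem_side (hT : T.IsTree) (hcd : T.Adj c d) (hβ : β ∈ T.side c d) :
    T.dist d β < T.dist c β := by
  obtain ⟨w, hw, hlen⟩ := (hT.connected c β).exists_path_of_dist
  cases w with
  | nil => exact absurd hβ notMem_side_left
  | cons hcd' q =>
    obtain rfl : _ = d := hT.isAcyclic.eq_of_mem_side hcd' hcd
      ⟨q, ((Walk.cons_isPath_iff _ _).mp hw).2⟩ hβ
    have := dist_le q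
    simp only [Walk.length_cons] at hlen
    omega

end SimpleGraph

open SimpleGraph Relation

section Interpolation

variable {X : Type*} [Preorder X] {S S' : Set X} {x y z : X}

def LeVia (S : Set X) (x y : X) : Prop :=
  x ≤ y → ∃ s ∈ S, x ≤ s ∧ s ≤ y

def CompVia (S : Set X) (x y : X) : Prop :=
  LeVia S x y ∧ LeVia S y x

lemma LeVia.le_iff (h : LeVia S x y) : x ≤ y ↔ ∃ s ∈ S, x ≤ s ∧ s ≤ y :=
  ⟨h, fun ⟨_, _, hxs, hsy⟩ => hxs.trans hsy⟩

lemma CompVia.symm (h : CompVia S x y) : CompVia S y x :=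
  And.symm h

lemma compVia_of_mem_left (hx : x ∈ S) : CompVia S x y :=
  ⟨fun h => ⟨x, hx, le_rfl, h⟩, fun h => ⟨x, hx, h, le_rfl⟩⟩

lemma compVia_of_mem_right (hy : y ∈ S) : CompVia S x y :=
  (compVia_of_mem_left hy).symm

lemma CompVia.trans (h : CompVia S z x) (h' : ∀ s ∈ S, CompVia S' s x) : CompVia S' z x := by
  refine ⟨fun hzx => ?_, fun hxz => ?_⟩
  · obtain ⟨s, hs, hzs, hsx⟩ := h.1 hzx
    obtain ⟨s', hs', hss', hs'x⟩ := (h' s hs).1 hsx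
    exact ⟨s', hs', hzs.trans hss', hs'x⟩
  · obtain ⟨s, hs, hxs, hsz⟩ := h.2 hxz
    obtain ⟨s', hs', hxs', hs's⟩ := (h' s hs).2 hxs
    exact ⟨s', hs', hxs', hs's.trans hsz⟩

end Interpolation

namespace TreeDecomp

variable {V ν : Type*} {G : SimpleGraph V} (td : TreeDecomp G ν)
  {x z : V} {c d e β β' : ν} {M N : Set ν}

def Confined (N : Set ν) (x : V) : Prop :=
  ∀ β, x ∈ td.bag β → β ∈ N

lemma confined_mono (hMN : M ⊆ N) (hx : td.Confined M x) : td.Confined N x :=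
  fun β hβ => hMN (hx β hβ)

lemma exists_mem_bag (x : V) : ∃ β, x ∈ td.bag β :=
  let ⟨⟨β, hβ⟩⟩ := (td.bag_connected x).nonempty
  ⟨β, hβ⟩

noncomputable def home (x : V) : ν :=
  (td.exists_mem_bag x).choose

lemma mem_bag_home (x : V) : x ∈ td.bag (td.home x) :=
  (td.exists_mem_bag x).choose_spec

lemma exists_walk_of_mem_bag (h : x ∈ td.bag β) (h' : x ∈ td.bag β') :
    ∃ w : td.tree.Walk β β', ∀ γ ∈ w.support, x ∈ td.bag γ := by
  obtain ⟨w⟩ := td.bag_connected x ⟨β, h⟩ ⟨β', h'⟩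
  refine ⟨w.map (Embedding.induce _).toHom, fun γ hγ => ?_⟩
  replace hγ : γ ∈ (w.map (Embedding.induce _).toHom).support := hγ
  rw [Walk.support_map, List.mem_map] at hγ
  obtain ⟨⟨γ, hγ⟩, -, rfl⟩ := hγ
  exact hγ

lemma mem_bag_of_mem_side (hβ : β ∈ td.tree.side c d) (hβ' : β' ∉ td.tree.side c d)
    (h : x ∈ td.bag β) (h' : x ∈ td.bag β') : x ∈ td.bag c := by
  obtain ⟨w, hw⟩ := td.exists_walk_of_mem_bag h h'
  by_contra hc
  exact hβ' (mem_side_of_walk hβ w fun hcw => hc (hw c hcw))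

lemma mem_bag_or_confined (hβ : β ∈ td.tree.side c d) (h : x ∈ td.bag β) :
    x ∈ td.bag c ∨ td.Confined (td.tree.side c d) x := by
  refine or_iff_not_imp_right.mpr fun hx => ?_
  simp only [Confined, not_forall] at hx
  obtain ⟨β', h', hβ'⟩ := hx
  exact td.mem_bag_of_mem_side hβ hβ' h h'

lemma notMem_bag_of_confined (hx : td.Confined (td.tree.side c d) x) : x ∉ td.bag c :=
  fun h => notMem_side_left (hx c h)

lemma exists_adj_confined (hx : x ∉ td.bag c) :
    ∃ d, td.tree.Adj c d ∧ td.Confined (td.tree.side c d) x := by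
  have hne : td.home x ≠ c := fun h => hx (h ▸ td.mem_bag_home x)
  obtain ⟨d, hcd, hd⟩ := exists_adj_mem_side td.isTree.connected hne
  exact ⟨d, hcd, (td.mem_bag_or_confined hd (td.mem_bag_home x)).resolve_left hx⟩

open scoped Classical in
noncomputable def branch (c : ν) (x : V) : ν :=
  if h : x ∈ td.bag c then c else (td.exists_adj_confined h).choose

lemma branch_spec (hx : x ∉ td.bag c) :
    td.tree.Adj c (td.branch c x) ∧ td.Confined (td.tree.side c (td.branch c x)) x := by
  simpa only [branch, dif_neg hx] using (td.exists_adj_confined hx).choose_spec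

lemma eq_of_confined (hcd : td.tree.Adj c d) (hce : td.tree.Adj c e)
    (hd : td.Confined (td.tree.side c d) x) (he : td.Confined (td.tree.side c e) x) : d = e :=
  td.isTree.isAcyclic.eq_of_mem_side hcd hce (hd _ (td.mem_bag_home x)) (he _ (td.mem_bag_home x))

/-- The last element of the chain that still has a bag off the side has, through the cover edge
to its successor, also a bag on the side, so it lies in the bag of `c`. -/
lemma exists_mem_bag_of_reflTransGen {r : V → V → Prop} (hr : ∀ a b, r a b → G.Adj a b)
    (h : ReflTransGen r z x) (hz : ¬ td.Confined (td.tree.side c d) z)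
    (hx : td.Confined (td.tree.side c d) x) :
    ∃ s ∈ td.bag c, ReflTransGen r z s ∧ ReflTransGen r s x := by
  induction h using ReflTransGen.head_induction_on with
  | refl => exact absurd hx hz
  | @head a b hab hbx ih =>
    by_cases hb : td.Confined (td.tree.side c d) b
    · obtain ⟨β, ha, hb'⟩ := td.bag_edge a b (hr a b hab)
      simp only [Confined, not_forall] at hz
      obtain ⟨β', ha', hβ'⟩ := hz
      exact ⟨a, td.mem_bag_of_mem_side (hb β hb') hβ' ha ha', .refl, .head hab hbx⟩
    · obtain ⟨s, hs, hbs, hsx⟩ := ih hb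
      exact ⟨s, hs, .head hab hbs, hsx⟩

end TreeDecomp

section CoverGraph

variable {X : Type*} [PartialOrder X] {ν : Type*}
  (td : TreeDecomp (coverGraphOf ((· ≤ ·) : X → X → Prop)) ν) {x y z : X} {c d e : ν}

lemma coverGraphOf_adj_of_covBy (h : x ⋖ y) :
    (coverGraphOf ((· ≤ ·) : X → X → Prop)).Adj x y := by
  refine Or.inl ⟨h.ne, h.le, fun z hxz hzy => ?_⟩
  by_contra! hz
  exact h.2 (hxz.lt_of_ne hz.1.symm) (hzy.lt_of_ne hz.2)

variable [Fintype X]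

lemma reflTransGen_covBy_iff_le : ReflTransGen (· ⋖ ·) x y ↔ x ≤ y := by
  classical
  let _ : LocallyFiniteOrder X := Fintype.toLocallyFiniteOrder
  exact le_iff_reflTransGen_covBy.symm

lemma TreeDecomp.compVia_bag_of_confined (hz : ¬ td.Confined (td.tree.side c d) z)
    (hx : td.Confined (td.tree.side c d) x) : CompVia (td.bag c) z x := by
  refine ⟨fun hzx => ?_, fun hxz => ?_⟩
  · obtain ⟨s, hs, hzs, hsx⟩ := td.exists_mem_bag_of_reflTransGen
      (fun _ _ => coverGraphOf_adj_of_covBy) (reflTransGen_covBy_iff_le.mpr hzx) hz hx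
    exact ⟨s, hs, reflTransGen_covBy_iff_le.mp hzs, reflTransGen_covBy_iff_le.mp hsx⟩
  · obtain ⟨s, hs, hzs, hsx⟩ := td.exists_mem_bag_of_reflTransGen (r := fun a b => b ⋖ a)
      (fun _ _ h => (coverGraphOf_adj_of_covBy h).symm)
      (reflTransGen_covBy_iff_le.mpr hxz).swap hz hx
    exact ⟨s, hs, reflTransGen_covBy_iff_le.mp hsx.swap, reflTransGen_covBy_iff_le.mp hzs.swap⟩

lemma TreeDecomp.compVia_bag_of_confined_sides (hcd : td.tree.Adj c d) (hce : td.tree.Adj c e)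
    (hde : d ≠ e) (hx : td.Confined (td.tree.side c d) x)
    (hy : td.Confined (td.tree.side c e) y) : CompVia (td.bag c) x y :=
  td.compVia_bag_of_confined (fun hx' => hde (td.eq_of_confined hcd hce hx hx')) hy

end CoverGraph

namespace BTree

variable {X : Type*}

lemma subtreeAt_append (t : BTree X) (p q : List Bool) :
    t.subtreeAt (p ++ q) = (t.subtreeAt p).bind (·.subtreeAt q) := by
  induction p generalizing t with
  | nil => rfl
  | cons b p ih =>
    cases t with
    | leaf x => rfl
    | node l r => exact ih _

lemma IsPos.of_prefix {t : BTree X} {p q : List Bool} (h : t.IsPos q) (hpq : p <+: q) :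
    t.IsPos p := by
  obtain ⟨r, rfl⟩ := hpq
  unfold IsPos at h ⊢
  rw [subtreeAt_append] at h
  cases hp : t.subtreeAt p <;> simp_all

lemma isPos_of_subtreeAt_eq_some {t t' : BTree X} {p : List Bool}
    (h : t.subtreeAt p = some t') : t.IsPos p := by
  simp [IsPos, h]

end BTree

lemma List.IsPrefix.ne_of_append_singleton {α : Type*} {u v : List α} {a : α}
    (h : u ++ [a] <+: v) : u ≠ v := by
  rintro rfl
  simpa using h.length_le

structure Layout (X : Type*) where
  tree : BTree X
  leafSet : Finset X
  leaves_eq : tree.leaves = leafSet.val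
  pos : X → List Bool
  pos_spec : ∀ x ∈ leafSet, tree.subtreeAt (pos x) = some (.leaf x)
  sep : List Bool → Finset X

namespace Layout

variable {X : Type*}

/-- Besides the leaves below `v`, the separators at or below `v`: labels are pairs of subsets of
separators, so relabelings have to be consistent on these elements too. -/
def under (L : Layout X) (v : List Bool) : Set X :=
  {x | x ∈ L.leafSet ∧ v <+: L.pos x} ∪ {x | ∃ w, L.tree.IsPos w ∧ v <+: w ∧ x ∈ L.sep w}

def support (L : Layout X) : Set X :=
  L.under []

lemma under_anti (L : Layout X) {v v' : List Bool} (h : v' <+: v) : L.under v ⊆ L.under v' := by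
  rintro x (⟨hx, hv⟩ | ⟨w, hw, hv, hxw⟩)
  · exact Or.inl ⟨hx, h.trans hv⟩
  · exact Or.inr ⟨w, hw, h.trans hv, hxw⟩

def leaf (x : X) : Layout X where
  tree := .leaf x
  leafSet := {x}
  leaves_eq := rfl
  pos _ := []
  pos_spec y hy := by rw [Finset.mem_singleton.mp hy]; rfl
  sep _ := {x}

lemma support_leaf (x : X) : (leaf x).support = {x} := by
  ext y
  simp [support, under, leaf]

section Node

variable [DecidableEq X]

def node (L R : Layout X) (h : Disjoint L.leafSet R.leafSet) (B : Finset X) : Layout X where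
  tree := .node L.tree R.tree
  leafSet := L.leafSet.disjUnion R.leafSet h
  leaves_eq := by
    change L.tree.leaves + R.tree.leaves = _
    rw [L.leaves_eq, R.leaves_eq]
    rfl
  pos x := if x ∈ L.leafSet then false :: L.pos x else true :: R.pos x
  pos_spec x hx := by
    rcases Finset.mem_disjUnion.mp hx with hx | hx
    · simpa [hx, BTree.subtreeAt] using L.pos_spec x hx
    · simpa [Finset.disjoint_right.mp h hx, BTree.subtreeAt] using R.pos_spec x hx
  sep
    | [] => B
    | false :: q => L.sep q
    | true :: q => R.sep q

variable {L R : Layout X} {h : Disjoint L.leafSet R.leafSet} {B : Finset X} {x : X}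

lemma mem_leafSet_node : x ∈ (L.node R h B).leafSet ↔ x ∈ L.leafSet ∨ x ∈ R.leafSet :=
  Finset.mem_disjUnion (h := h)

lemma cons_false_prefix_pos_node {v : List Bool} :
    false :: v <+: (L.node R h B).pos x ↔ x ∈ L.leafSet ∧ v <+: L.pos x := by
  by_cases hx : x ∈ L.leafSet <;> simp [node, hx]

lemma cons_true_prefix_pos_node {v : List Bool} :
    true :: v <+: (L.node R h B).pos x ↔ x ∉ L.leafSet ∧ v <+: R.pos x := by
  by_cases hx : x ∈ L.leafSet <;> simp [node, hx]

lemma under_node_false (v : List Bool) : (L.node R h B).under (false :: v) = L.under v := by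
  ext x
  by_cases hx : x ∈ L.leafSet <;>
    simp [under, node, hx, List.cons_prefix_iff, BTree.IsPos, BTree.subtreeAt]

lemma under_node_true (v : List Bool) : (L.node R h B).under (true :: v) = R.under v := by
  ext x
  by_cases hx : x ∈ L.leafSet
  · simp [under, node, hx, List.cons_prefix_iff, BTree.IsPos, BTree.subtreeAt,
      Finset.disjoint_left.mp h hx]
  · simp [under, node, hx, List.cons_prefix_iff, BTree.IsPos, BTree.subtreeAt]

lemma support_node : (L.node R h B).support = ↑B ∪ L.support ∪ R.support := by
  have hpos : ∀ P : List Bool → Prop,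
      (∃ w, P w) ↔ P [] ∨ (∃ q, P (false :: q)) ∨ ∃ q, P (true :: q) := by
    refine fun P => ⟨?_, ?_⟩
    · rintro ⟨_ | ⟨_ | _, q⟩, hw⟩
      exacts [Or.inl hw, Or.inr (Or.inl ⟨q, hw⟩), Or.inr (Or.inr ⟨q, hw⟩)]
    · rintro (hw | ⟨q, hw⟩ | ⟨q, hw⟩) <;> exact ⟨_, hw⟩
  ext x
  simp only [support, under, node, Set.mem_union, Set.mem_ofPred_eq]
  rw [hpos]
  simp only [Finset.disjUnion_eq_union, Finset.mem_union, List.nil_prefix, and_true,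
    BTree.IsPos, BTree.subtreeAt, Option.isSome_some, true_and, Bool.false_eq_true,
    ↓reduceIte, SetLike.mem_coe]
  simp only [or_left_comm, or_assoc]

end Node

variable [Preorder X]

structure IsSeparating (L : Layout X) : Prop where
  step : ∀ u b, L.tree.IsPos (u ++ [b]) → ∀ z ∈ L.sep u, ∀ x ∈ L.under (u ++ [b]),
    CompVia ↑(L.sep (u ++ [b])) z x
  split : ∀ u, ∀ x ∈ L.leafSet, ∀ y ∈ L.leafSet, u ++ [false] <+: L.pos x →
    u ++ [true] <+: L.pos y → CompVia ↑(L.sep u) x y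

def RootSeparates (L : Layout X) (Z : Set X) : Prop :=
  ∀ z ∈ Z, ∀ x ∈ L.support, CompVia ↑(L.sep []) z x

lemma RootSeparates.mono {L : Layout X} {Z Z' : Set X} (h : L.RootSeparates Z) (hZ : Z' ⊆ Z) :
    L.RootSeparates Z' :=
  fun z hz => h z (hZ hz)

lemma rootSeparates_sep_nil (L : Layout X) : L.RootSeparates ↑(L.sep []) :=
  fun _ hz _ _ => compVia_of_mem_left hz

lemma rootSeparates_leaf (x : X) (Z : Set X) : (leaf x).RootSeparates Z := by
  intro z _ y hy
  rw [support_leaf, Set.mem_singleton_iff] at hy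
  exact compVia_of_mem_right (by simp [hy, leaf])

lemma isSeparating_leaf (x : X) : (leaf x).IsSeparating where
  step u b h := by cases u <;> cases h
  split u _ _ _ _ h := absurd h.length_le (by simp [leaf])

theorem IsSeparating.node [DecidableEq X] {L R : Layout X} {h : Disjoint L.leafSet R.leafSet}
    {B : Finset X} (hL : L.IsSeparating) (hR : R.IsSeparating)
    (hLB : L.RootSeparates B) (hRB : R.RootSeparates B)
    (hsplit : ∀ x ∈ L.leafSet, ∀ y ∈ R.leafSet, CompVia B x y) :
    (L.node R h B).IsSeparating where
  step u b hpos z hz x hx := by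
    match u, b with
    | [], false => rw [List.nil_append, under_node_false] at hx; exact hLB z hz x hx
    | [], true => rw [List.nil_append, under_node_true] at hx; exact hRB z hz x hx
    | false :: u, b =>
      rw [List.cons_append, under_node_false] at hx
      exact hL.step u b hpos z hz x hx
    | true :: u, b =>
      rw [List.cons_append, under_node_true] at hx
      exact hR.step u b hpos z hz x hx
  split u x hx y hy hpx hpy := by
    match u with
    | [] =>
      rw [List.nil_append, cons_false_prefix_pos_node] at hpx
      rw [List.nil_append, cons_true_prefix_pos_node] at hpy
      exact hsplit x hpx.1 y ((mem_leafSet_node.mp hy).resolve_left hpy.1)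
    | false :: u =>
      rw [List.cons_append, cons_false_prefix_pos_node] at hpx hpy
      exact hL.split u x hpx.1 y hpy.1 hpx.2 hpy.2
    | true :: u =>
      rw [List.cons_append, cons_true_prefix_pos_node] at hpx hpy
      exact hR.split u x ((mem_leafSet_node.mp hx).resolve_left hpx.1)
        y ((mem_leafSet_node.mp hy).resolve_left hpy.1) hpx.2 hpy.2

/-- Joins the layouts `L i`, `i ∈ s`, by binary nodes all carrying the separator `B`. -/
theorem exists_isSeparating_biUnion [DecidableEq X] {ι : Type*} (B : Finset X)
    (L : ι → Layout X) {s : Finset ι} (hs : s.Nonempty)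
    (hdisj : (s : Set ι).PairwiseDisjoint fun i => (L i).leafSet)
    (hL : ∀ i ∈ s, (L i).IsSeparating) (hB : ∀ i ∈ s, (L i).RootSeparates B)
    (hcross : ∀ i ∈ s, ∀ j ∈ s, i ≠ j →
      ∀ x ∈ (L i).leafSet, ∀ y ∈ (L j).leafSet, CompVia B x y)
    (Q : Finset X → Prop) (hQB : Q B) (hQ : ∀ i ∈ s, ∀ p, Q ((L i).sep p)) :
    ∃ P : Layout X, P.IsSeparating ∧ P.leafSet = s.biUnion (fun i => (L i).leafSet) ∧
      (∀ p, Q (P.sep p)) ∧ P.support ⊆ ↑B ∪ ⋃ i ∈ s, (L i).support ∧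
      (P.sep [] = B ∨ ∃ i ∈ s, P = L i) := by
  induction hs using Finset.Nonempty.cons_induction with
  | singleton a =>
    simp only [Finset.mem_singleton, forall_eq] at hL hB hQ
    refine ⟨L a, hL, by simp, hQ, ?_, Or.inr ⟨a, Finset.mem_singleton_self a, rfl⟩⟩
    exact Set.subset_union_of_subset_right
      (Set.subset_biUnion_of_mem (u := fun i => (L i).support) (by simp)) _
  | cons a s ha hs ih =>
    simp only [Finset.mem_cons, forall_eq_or_imp] at hL hB hQ hcross
    obtain ⟨P, hP, hPleaf, hPQ, hPsupp, hProot⟩ := ih (hdisj.subset (by simp)) hL.2 hB.2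
      (fun i hi => (hcross.2 i hi).2) hQ.2
    have haP : Disjoint (L a).leafSet P.leafSet := by
      rw [hPleaf, Finset.disjoint_biUnion_right]
      exact fun i hi => hdisj (by simp) (by simp [hi]) (fun h => ha (h ▸ hi))
    refine ⟨(L a).node P haP B, hL.1.node hP hB.1 ?_ ?_, ?_, ?_, ?_, Or.inl rfl⟩
    · rcases hProot with h | ⟨i, hi, rfl⟩
      · exact h ▸ P.rootSeparates_sep_nil
      · exact hB.2 i hi
    · intro x hx y hy
      rw [hPleaf, Finset.mem_biUnion] at hy
      obtain ⟨j, hj, hy⟩ := hy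
      exact hcross.1.2 j hj (fun h => ha (h ▸ hj)) x hx y hy
    · ext x
      simp [mem_leafSet_node, hPleaf]
    · rintro (_ | ⟨_ | _, q⟩)
      exacts [hQB, hQ.1 q, hPQ q]
    · rw [support_node]
      refine Set.union_subset (Set.union_subset Set.subset_union_left ?_) ?_
      · exact Set.subset_union_of_subset_right
          (Set.subset_biUnion_of_mem (u := fun i => (L i).support) (by simp)) _
      · refine hPsupp.trans (Set.union_subset_union_right _ ?_)
        exact Set.biUnion_subset_biUnion_left (by simp)

theorem IsSeparating.compVia_of_prefix {L : Layout X} (hL : L.IsSeparating) {u v : List Bool}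
    (huv : u <+: v) (hne : u ≠ v) (hv : L.tree.IsPos v) {z x : X} (hz : z ∈ L.sep u)
    (hx : x ∈ L.under v) : CompVia ↑(L.sep v) z x := by
  obtain ⟨r, rfl⟩ := huv
  induction r generalizing u z with
  | nil => simp at hne
  | cons b r ih =>
    have hb : u ++ [b] <+: u ++ b :: r := ⟨r, by simp⟩
    have hstep := hL.step u b (hv.of_prefix hb) z hz x (L.under_anti hb hx)
    rcases eq_or_ne r [] with rfl | hr
    · exact hstep
    · refine hstep.trans fun s hs => ?_
      simpa using ih (u := u ++ [b]) hs (by simpa using hr) (by simpa using hv) (by simpa using hx)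

end Layout

lemma exists_enc_dec {α : Type*} (A : Finset α) (hA : A.Nonempty) {m : ℕ} (hm : A.card ≤ m) :
    ∃ (enc : α → Fin m) (dec : Fin m → α), (∀ i, dec i ∈ A) ∧ ∀ a ∈ A, dec (enc a) = a := by
  classical
  obtain ⟨e⟩ : Nonempty (A ↪ Fin m) := Function.Embedding.nonempty_of_card_le (by simpa using hm)
  have : Nonempty A := hA.to_subtype
  refine ⟨fun a => if h : a ∈ A then e ⟨a, h⟩ else e (Classical.arbitrary _),
    fun i => (Function.invFun e i).1, fun i => (Function.invFun e i).2, fun a ha => ?_⟩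
  simp [ha, Function.leftInverse_invFun e.injective _]

section Profiles

variable {X : Type*}

def pairs (S : Finset X) : Finset (Finset X × Finset X) :=
  S.powerset ×ˢ S.powerset

lemma card_pairs (S : Finset X) : (pairs S).card = 4 ^ S.card := by
  rw [pairs, Finset.card_product, Finset.card_powerset, ← pow_two, ← pow_mul, pow_mul']
  norm_num

variable [Preorder X] {S T U : Finset X} {x y z : X}

open scoped Classical in
noncomputable def profile (S : Finset X) (x : X) : Finset X × Finset X :=
  (S.filter (· ≤ x), S.filter (x ≤ ·))

open scoped Classical in
noncomputable def project (S : Finset X) (q : Finset X × Finset X) : Finset X × Finset X :=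
  (S.filter fun z => ∃ s ∈ q.1, z ≤ s, S.filter fun z => ∃ s ∈ q.2, s ≤ z)

lemma mem_profile_fst : z ∈ (profile S x).1 ↔ z ∈ S ∧ z ≤ x := by
  classical exact Finset.mem_filter

lemma mem_profile_snd : z ∈ (profile S x).2 ↔ z ∈ S ∧ x ≤ z := by
  classical exact Finset.mem_filter

lemma mem_project_fst {q : Finset X × Finset X} :
    z ∈ (project S q).1 ↔ z ∈ S ∧ ∃ s ∈ q.1, z ≤ s := by
  classical exact Finset.mem_filter

lemma mem_project_snd {q : Finset X × Finset X} :
    z ∈ (project S q).2 ↔ z ∈ S ∧ ∃ s ∈ q.2, s ≤ z := by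
  classical exact Finset.mem_filter

lemma profile_mem_pairs (S : Finset X) (x : X) : profile S x ∈ pairs S := by
  simp [pairs, profile]

lemma project_mem_pairs (S : Finset X) (q : Finset X × Finset X) : project S q ∈ pairs S := by
  simp [pairs, project]

lemma project_profile (h : ∀ z ∈ S, CompVia ↑T z x) : project S (profile T x) = profile S x := by
  ext z
  · simp only [mem_project_fst, mem_profile_fst]
    refine and_congr_right fun hz => ⟨?_, fun hzx => ?_⟩
    · rintro ⟨s, ⟨-, hsx⟩, hzs⟩
      exact hzs.trans hsx
    · obtain ⟨s, hs, hzs, hsx⟩ := (h z hz).1 hzx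
      exact ⟨s, ⟨hs, hsx⟩, hzs⟩
  · simp only [mem_project_snd, mem_profile_snd]
    refine and_congr_right fun hz => ⟨?_, fun hxz => ?_⟩
    · rintro ⟨s, ⟨-, hxs⟩, hsz⟩
      exact hxs.trans hsz
    · obtain ⟨s, hs, hxs, hsz⟩ := (h z hz).2 hxz
      exact ⟨s, ⟨hs, hxs⟩, hsz⟩

lemma project_project (h : ∀ z ∈ S, ∀ s ∈ U, CompVia ↑T z s) {q : Finset X × Finset X}
    (hq : q ∈ pairs U) : project S (project T q) = project S q := by
  simp only [pairs, Finset.mem_product, Finset.mem_powerset] at hq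
  ext z
  · simp only [mem_project_fst]
    refine and_congr_right fun hz => ⟨?_, ?_⟩
    · rintro ⟨s', ⟨-, s, hs, hs's⟩, hzs'⟩
      exact ⟨s, hs, hzs'.trans hs's⟩
    · rintro ⟨s, hs, hzs⟩
      obtain ⟨s', hs', hzs', hs's⟩ := (h z hz s (hq.1 hs)).1 hzs
      exact ⟨s', ⟨hs', s, hs, hs's⟩, hzs'⟩
  · simp only [mem_project_snd]
    refine and_congr_right fun hz => ⟨?_, ?_⟩
    · rintro ⟨s', ⟨-, s, hs, hss'⟩, hs'z⟩
      exact ⟨s, hs, hss'.trans hs'z⟩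
    · rintro ⟨s, hs, hsz⟩
      obtain ⟨s', hs', hss', hs'z⟩ := (h z hz s (hq.2 hs)).2 hsz
      exact ⟨s', ⟨hs', s, hs, hss'⟩, hs'z⟩

lemma exists_mem_profile_iff :
    (∃ z, z ∈ (profile S x).2 ∧ z ∈ (profile S y).1) ↔ ∃ z ∈ S, x ≤ z ∧ z ≤ y := by
  simp only [mem_profile_fst, mem_profile_snd]
  constructor
  · rintro ⟨z, ⟨hz, hxz⟩, -, hzy⟩
    exact ⟨z, hz, hxz, hzy⟩
  · rintro ⟨z, hz, hxz, hzy⟩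
    exact ⟨z, ⟨hz, hxz⟩, hz, hzy⟩

end Profiles

/-- The label of a leaf `x` at position `u` encodes `profile (L.sep u) x`, and the relabelings
are induced by `project`. -/
theorem Layout.IsSeparating.nlcWidthLE {X : Type*} [PartialOrder X] [Fintype X] {L : Layout X}
    (hL : L.IsSeparating) (huniv : L.leafSet = Finset.univ) {t : ℕ}
    (ht : ∀ p, (L.sep p).card ≤ t) : nlcWidthLE X (4 ^ t) := by
  choose enc dec hdec henc using fun p => exists_enc_dec (m := 4 ^ t) (pairs (L.sep p))
    ⟨(∅, ∅), by simp [pairs]⟩ ((card_pairs _).trans_le (Nat.pow_le_pow_right (by norm_num) (ht p)))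
  have hmem (x : X) : x ∈ L.leafSet := huniv ▸ Finset.mem_univ x
  have hlabel {u : List Bool} {x : X} (hu : u <+: L.pos x) (hne : u ≠ L.pos x) :
      enc u (project (L.sep u) (dec (L.pos x) (enc (L.pos x) (profile (L.sep (L.pos x)) x)))) =
        enc u (profile (L.sep u) x) := by
    rw [henc _ _ (profile_mem_pairs _ _), project_profile fun z hz =>
      hL.compVia_of_prefix hu hne (BTree.isPos_of_subtreeAt_eq_some (L.pos_spec x (hmem x))) hz
        (Or.inl ⟨hmem x, List.prefix_rfl⟩)]
  refine ⟨4 ^ t, le_rfl, ⟨{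
    tree := L.tree
    pos := L.pos
    pos_spec := fun x => L.pos_spec x (hmem x)
    leaves_eq := huniv ▸ L.leaves_eq
    init := fun x => enc (L.pos x) (profile (L.sep (L.pos x)) x)
    rel := fun u v γ => enc u (project (L.sep u) (dec v γ))
    rel_comp := fun u v w hw huv hne hvw hne' γ => by
      rw [henc _ _ (project_mem_pairs _ _), project_project (fun z hz s hs =>
        hL.compVia_of_prefix huv hne (hw.of_prefix hvw) hz (Or.inr ⟨w, hw, hvw, hs⟩)) (hdec w γ)]
    R := fun u => {γδ | ∃ z, z ∈ (dec u γδ.1).2 ∧ z ∈ (dec u γδ.2).1}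
    R' := fun u => {γδ | ∃ z, z ∈ (dec u γδ.1).2 ∧ z ∈ (dec u γδ.2).1}
    encode := fun x y _ hx hy => by
      rw [hlabel (List.prefix_append _ _ |>.trans hx) hx.ne_of_append_singleton,
        hlabel (List.prefix_append _ _ |>.trans hy) hy.ne_of_append_singleton]
      simp only [Set.mem_ofPred_eq, henc _ _ (profile_mem_pairs _ _), exists_mem_profile_iff]
      have hsplit := hL.split _ x (hmem x) y (hmem y) hx hy
      exact ⟨hsplit.1.le_iff, hsplit.2.le_iff⟩ }⟩⟩

namespace TreeDecomp

variable {X : Type*} [PartialOrder X] {ν : Type*}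
  (td : TreeDecomp (coverGraphOf ((· ≤ ·) : X → X → Prop)) ν) {c d : ν} {x : X} {M N : Set ν}

def AdaptedLayout (N : Set ν) (P : Layout X) : Prop :=
  P.IsSeparating ∧ (∀ q, ∃ β ∈ N, ↑(P.sep q) ⊆ td.bag β) ∧
    P.RootSeparates {z | ¬ td.Confined N z}

variable {td} in
lemma AdaptedLayout.rootSeparates_bag {P : Layout X}
    (hP : td.AdaptedLayout (td.tree.side c d) P) : P.RootSeparates (td.bag c) :=
  hP.2.2.mono fun _ hz hconf => notMem_side_left (hconf c hz)

variable {td} in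
lemma AdaptedLayout.rootSeparates_of_subset {P : Layout X} (hP : td.AdaptedLayout M P)
    (hMN : M ⊆ N) : P.RootSeparates {z | ¬ td.Confined N z} :=
  hP.2.2.mono fun _ hz hconf => hz (td.confined_mono hMN hconf)

lemma side_branch_subset (hN : N = Set.univ ∨ ∃ p, td.tree.Adj p c ∧ N = td.tree.side p c)
    (hxc : x ∉ td.bag c) (hxN : td.Confined N x) : td.tree.side c (td.branch c x) ⊆ N := by
  obtain ⟨hcd, hxd⟩ := td.branch_spec hxc
  obtain rfl | ⟨p, hpc, rfl⟩ := hN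
  · exact Set.subset_univ _
  · refine td.isTree.isAcyclic.side_subset_side hpc hcd fun hdp => ?_
    exact Set.disjoint_left.mp (td.isTree.isAcyclic.disjoint_side_swap hpc)
      (hxN _ (td.mem_bag_home x)) (hdp ▸ hxd _ (td.mem_bag_home x))

lemma sum_dist_home_lt (hcd : td.tree.Adj c d) {W W' : Finset X} (hW' : W'.Nonempty)
    (hsub : W' ⊆ W) (hconf : ∀ x ∈ W', td.Confined (td.tree.side c d) x) :
    ∑ x ∈ W', td.tree.dist d (td.home x) < ∑ x ∈ W, td.tree.dist c (td.home x) :=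
  (Finset.sum_lt_sum_of_nonempty hW' fun x hx =>
    td.isTree.dist_lt_of_mem_side hcd (hconf x hx _ (td.mem_bag_home x))).trans_le
    (Finset.sum_le_sum_of_subset hsub)

/-- The pieces joined at `c`: a leaf for each `x ∈ I` and the layout `child d` for each
`d ∈ dirs`. -/
structure Branching (c : ν) (N : Set ν) (I : Finset X) (dirs : Finset ν)
    (child : ν → Layout X) : Prop where
  mem_bag : ∀ x ∈ I, x ∈ td.bag c
  adj : ∀ d ∈ dirs, td.tree.Adj c d
  side_subset : ∀ d ∈ dirs, td.tree.side c d ⊆ N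
  adapted : ∀ d ∈ dirs, td.AdaptedLayout (td.tree.side c d) (child d)
  confined : ∀ d ∈ dirs, ∀ x ∈ (child d).leafSet, td.Confined (td.tree.side c d) x

theorem exists_branching [DecidableEq X] {W : Finset X} (hW : W.Nonempty)
    (hN : N = Set.univ ∨ ∃ p, td.tree.Adj p c ∧ N = td.tree.side p c)
    (hWN : ∀ x ∈ W, x ∈ td.bag c ∨ td.Confined N x)
    (ih : ∀ d, td.tree.Adj c d → ∀ W' ⊆ W, W'.Nonempty →
      (∀ x ∈ W', td.Confined (td.tree.side c d) x) →
      ∃ P : Layout X, P.leafSet = W' ∧ td.AdaptedLayout (td.tree.side c d) P) :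
    ∃ (I : Finset X) (dirs : Finset ν) (child : ν → Layout X), td.Branching c N I dirs child ∧
      (I.disjSum dirs).biUnion (fun i => (Sum.elim Layout.leaf child i).leafSet) = W := by
  classical
  set dirs := (W.filter (· ∉ td.bag c)).image (td.branch c)
  set part : ν → Finset X := fun d => W.filter fun x => x ∉ td.bag c ∧ td.branch c x = d
  have hpart : ∀ d ∈ dirs, td.tree.Adj c d ∧ td.tree.side c d ⊆ N ∧ (part d).Nonempty ∧
      ∀ x ∈ part d, td.Confined (td.tree.side c d) x := by
    intro d hd
    obtain ⟨x, hx, rfl⟩ := Finset.mem_image.mp hd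
    rw [Finset.mem_filter] at hx
    refine ⟨(td.branch_spec hx.2).1, td.side_branch_subset hN hx.2
      ((hWN x hx.1).resolve_left hx.2), ⟨x, by simp [part, hx]⟩, fun y hy => ?_⟩
    rw [Finset.mem_filter] at hy
    exact hy.2.2 ▸ (td.branch_spec hy.2.1).2
  have : Nonempty (Layout X) := ⟨.leaf hW.choose⟩
  choose! child hchild_leaf hchild using fun d hd => ih d (hpart d hd).1 (part d)
    (Finset.filter_subset _ _) (hpart d hd).2.2.1 (hpart d hd).2.2.2
  refine ⟨W.filter (· ∈ td.bag c), dirs, child, ⟨fun x hx => (Finset.mem_filter.mp hx).2,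
    fun d hd => (hpart d hd).1, fun d hd => (hpart d hd).2.1, hchild,
    fun d hd => hchild_leaf d hd ▸ (hpart d hd).2.2.2⟩,
    Finset.ext fun a => ⟨fun ha => ?_, fun ha => ?_⟩⟩
  · obtain ⟨x | d, hi, ha⟩ := Finset.mem_biUnion.mp ha
    · exact Finset.mem_singleton.mp ha ▸ (Finset.mem_filter.mp (Finset.inl_mem_disjSum.mp hi)).1
    · rw [Sum.elim_inr, hchild_leaf d (Finset.inr_mem_disjSum.mp hi)] at ha
      exact (Finset.mem_filter.mp ha).1
  · refine Finset.mem_biUnion.mpr ?_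
    by_cases hac : a ∈ td.bag c
    · exact ⟨.inl a, Finset.inl_mem_disjSum.mpr (Finset.mem_filter.mpr ⟨ha, hac⟩),
        Finset.mem_singleton_self a⟩
    · have hd : td.branch c a ∈ dirs :=
        Finset.mem_image_of_mem _ (Finset.mem_filter.mpr ⟨ha, hac⟩)
      refine ⟨.inr (td.branch c a), Finset.inr_mem_disjSum.mpr hd, ?_⟩
      simp [hchild_leaf _ hd, part, ha, hac]

namespace Branching

variable {td} {I : Finset X} {dirs : Finset ν} {child : ν → Layout X}

lemma pairwiseDisjoint (hB : td.Branching c N I dirs child) :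
    (I.disjSum dirs : Set (X ⊕ ν)).PairwiseDisjoint
      fun i => (Sum.elim Layout.leaf child i).leafSet := by
  rintro (x | d) hi (y | e) hj hij <;> refine Finset.disjoint_left.mpr fun a ha ha' => hij ?_
  · simp only [Sum.elim_inl, Layout.leaf, Finset.mem_singleton] at ha ha'
    rw [← ha, ← ha']
  · simp only [Sum.elim_inl, Layout.leaf, Finset.mem_singleton] at ha
    exact absurd (hB.mem_bag x (Finset.inl_mem_disjSum.mp hi)) (ha ▸
      td.notMem_bag_of_confined (hB.confined e (Finset.inr_mem_disjSum.mp hj) a ha'))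
  · simp only [Sum.elim_inl, Layout.leaf, Finset.mem_singleton] at ha'
    exact absurd (hB.mem_bag y (Finset.inl_mem_disjSum.mp hj)) (ha' ▸
      td.notMem_bag_of_confined (hB.confined d (Finset.inr_mem_disjSum.mp hi) a ha))
  · have hd := Finset.inr_mem_disjSum.mp hi
    have he := Finset.inr_mem_disjSum.mp hj
    rw [td.eq_of_confined (hB.adj d hd) (hB.adj e he) (hB.confined d hd a ha)
      (hB.confined e he a ha')]

lemma isSeparating (hB : td.Branching c N I dirs child) :
    ∀ i ∈ I.disjSum dirs, (Sum.elim Layout.leaf child i).IsSeparating := by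
  rintro (x | d) hi
  exacts [Layout.isSeparating_leaf x, (hB.adapted d (Finset.inr_mem_disjSum.mp hi)).1]

lemma rootSeparates_bag (hB : td.Branching c N I dirs child) :
    ∀ i ∈ I.disjSum dirs, (Sum.elim Layout.leaf child i).RootSeparates (td.bag c) := by
  rintro (x | d) hi
  exacts [Layout.rootSeparates_leaf x _,
    (hB.adapted d (Finset.inr_mem_disjSum.mp hi)).rootSeparates_bag]

lemma rootSeparates (hB : td.Branching c N I dirs child) :
    ∀ i ∈ I.disjSum dirs,
      (Sum.elim Layout.leaf child i).RootSeparates {z | ¬ td.Confined N z} := by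
  rintro (x | d) hi
  · exact Layout.rootSeparates_leaf x _
  · have hd := Finset.inr_mem_disjSum.mp hi
    exact (hB.adapted d hd).rootSeparates_of_subset (hB.side_subset d hd)

lemma exists_sep_subset (hB : td.Branching c N I dirs child) (hcN : c ∈ N) :
    ∀ i ∈ I.disjSum dirs, ∀ q, ∃ β ∈ N, ↑((Sum.elim Layout.leaf child i).sep q) ⊆ td.bag β := by
  rintro (x | d) hi q
  · exact ⟨c, hcN, by simpa [Layout.leaf] using hB.mem_bag x (Finset.inl_mem_disjSum.mp hi)⟩
  · have hd := Finset.inr_mem_disjSum.mp hi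
    obtain ⟨β, hβ, hqβ⟩ := (hB.adapted d hd).2.1 q
    exact ⟨β, hB.side_subset d hd hβ, hqβ⟩

variable [Fintype X]

lemma compVia (hB : td.Branching c N I dirs child) :
    ∀ i ∈ I.disjSum dirs, ∀ j ∈ I.disjSum dirs, i ≠ j →
      ∀ x ∈ (Sum.elim Layout.leaf child i).leafSet,
      ∀ y ∈ (Sum.elim Layout.leaf child j).leafSet, CompVia (td.bag c) x y := by
  rintro (x | d) hi (y | e) hj hij a ha b hb
  · exact compVia_of_mem_left (Finset.mem_singleton.mp ha ▸
      hB.mem_bag x (Finset.inl_mem_disjSum.mp hi))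
  · exact compVia_of_mem_left (Finset.mem_singleton.mp ha ▸
      hB.mem_bag x (Finset.inl_mem_disjSum.mp hi))
  · exact compVia_of_mem_right (Finset.mem_singleton.mp hb ▸
      hB.mem_bag y (Finset.inl_mem_disjSum.mp hj))
  · have hd := Finset.inr_mem_disjSum.mp hi
    have he := Finset.inr_mem_disjSum.mp hj
    exact td.compVia_bag_of_confined_sides (hB.adj d hd) (hB.adj e he) (fun h => hij (h ▸ rfl))
      (hB.confined d hd a ha) (hB.confined e he b hb)

lemma compVia_of_mem_support (hB : td.Branching c N I dirs child) {z : X}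
    (hz : ¬ td.Confined N z) :
    ∀ i ∈ I.disjSum dirs, ∀ x ∈ (Sum.elim Layout.leaf child i).support,
      CompVia (td.bag c) z x := by
  rintro (x' | d) hi x hx
  · rw [Sum.elim_inl, Layout.support_leaf, Set.mem_singleton_iff] at hx
    exact compVia_of_mem_right (hx ▸ hB.mem_bag x' (Finset.inl_mem_disjSum.mp hi))
  · have hd := Finset.inr_mem_disjSum.mp hi
    have hzd : ¬ td.Confined (td.tree.side c d) z :=
      fun h => hz (td.confined_mono (hB.side_subset d hd) h)
    have hxd : ∃ β ∈ td.tree.side c d, x ∈ td.bag β := by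
      rcases hx with ⟨hx, -⟩ | ⟨q, -, -, hxq⟩
      · exact ⟨_, hB.confined d hd x hx _ (td.mem_bag_home x), td.mem_bag_home x⟩
      · obtain ⟨β, hβ, hqβ⟩ := (hB.adapted d hd).2.1 q
        exact ⟨β, hβ, hqβ hxq⟩
    obtain ⟨β, hβ, hxβ⟩ := hxd
    rcases td.mem_bag_or_confined hβ hxβ with hxc | hxc
    · exact compVia_of_mem_right hxc
    · exact td.compVia_bag_of_confined hzd hxc

theorem exists_adaptedLayout [DecidableEq X] (hB : td.Branching c N I dirs child) (hcN : c ∈ N)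
    (hs : (I.disjSum dirs).Nonempty) :
    ∃ P : Layout X, P.leafSet = (I.disjSum dirs).biUnion
      (fun i => (Sum.elim Layout.leaf child i).leafSet) ∧ td.AdaptedLayout N P := by
  classical
  have hbag : (↑(td.bag c).toFinset : Set X) = td.bag c := Set.coe_toFinset _
  obtain ⟨P, hPsep, hPleaf, hPQ, hPsupp, hProot⟩ := Layout.exists_isSeparating_biUnion
    (td.bag c).toFinset _ hs hB.pairwiseDisjoint hB.isSeparating
    (by rw [hbag]; exact hB.rootSeparates_bag) (by rw [hbag]; exact hB.compVia)
    (fun S => ∃ β ∈ N, ↑S ⊆ td.bag β) ⟨c, hcN, by simp⟩ (hB.exists_sep_subset hcN)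
  refine ⟨P, hPleaf, hPsep, hPQ, fun z hz x hx => ?_⟩
  rcases hProot with h | ⟨i, hi, rfl⟩
  · rw [h, hbag]
    rcases hPsupp hx with hxc | hxs
    · exact compVia_of_mem_right (hbag ▸ hxc)
    · simp only [Set.mem_iUnion] at hxs
      obtain ⟨i, hi, hxi⟩ := hxs
      exact hB.compVia_of_mem_support hz i hi x hxi
  · exact hB.rootSeparates i hi z hz x hx

end Branching

variable [Fintype X]

/-- Recursion on `∑ x ∈ W, dist c (home x)`, which drops when passing to a branch since the homes
of its elements lie behind the neighbour. -/
theorem exists_adaptedLayout (W : Finset X) (hW : W.Nonempty) (c : ν) (N : Set ν)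
    (hN : N = Set.univ ∨ ∃ p, td.tree.Adj p c ∧ N = td.tree.side p c)
    (hWN : ∀ x ∈ W, x ∈ td.bag c ∨ td.Confined N x) :
    ∃ P : Layout X, P.leafSet = W ∧ td.AdaptedLayout N P := by
  induction h : ∑ x ∈ W, td.tree.dist c (td.home x) using Nat.strong_induction_on
    generalizing W c N with
  | _ n ih =>
    classical
    have hcN : c ∈ N := by
      obtain rfl | ⟨p, hpc, rfl⟩ := hN
      exacts [Set.mem_univ c, mem_side_self hpc]
    obtain ⟨I, dirs, child, hB, hleaf⟩ := td.exists_branching hW hN hWN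
      fun d hcd W' hW'W hW' hconf => ih _ (h ▸ td.sum_dist_home_lt hcd hW' hW'W hconf) W' hW' d _
        (Or.inr ⟨c, hcd, rfl⟩) (fun x hx => Or.inr (hconf x hx)) rfl
    obtain ⟨i, hi, -⟩ := Finset.biUnion_nonempty.mp (hleaf ▸ hW)
    obtain ⟨P, hPleaf, hP⟩ := hB.exists_adaptedLayout hcN ⟨i, hi⟩
    exact ⟨P, hPleaf.trans hleaf, hP⟩

end TreeDecomp

theorem nlcWidth_of_treewidth (t : ℕ) (ht : 1 ≤ t)
    (X : Type) [PartialOrder X] [Fintype X] [Nonempty X]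
    (htw : treewidthLE (coverGraphOf ((· ≤ ·) : X → X → Prop)) (t - 1)) :
    nlcWidthLE X (4 ^ t) := by
  obtain ⟨ν, td, hbag⟩ := htw
  obtain ⟨P, hPX, hP⟩ := td.exists_adaptedLayout Finset.univ Finset.univ_nonempty
    (td.home (Classical.arbitrary X)) Set.univ (Or.inl rfl)
    fun _ _ => Or.inr fun _ _ => Set.mem_univ _
  refine hP.1.nlcWidthLE hPX fun q => ?_
  obtain ⟨β, -, hβ⟩ := hP.2.1 q
  calc (P.sep q).card = (↑(P.sep q) : Set X).ncard := (Set.ncard_coe_finset _).symm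
    _ ≤ (td.bag β).ncard := Set.ncard_le_ncard hβ (Set.toFinite _)
    _ ≤ t := by have := hbag β; omega
end

section
/- Let k ≥ 3 and let a_1,…,a_k, b_1,…,b_k, c_1,…,c_{k−1}, d_1,…,d_{k−1} be elements of a poset such that: (1) a_j ≤ c_j ≤ b_{j+1} and b_j ≥ d_j ≥ a_{j+1} for every j ∈ [k−1]; (2) c_1 ≤ ⋯ ≤ c_{k−1} and d_1 ≥ ⋯ ≥ d_{k−1}; (3) a_j ≰ b_j for every j ∈ [k]. Then the elements a_2,…,a_{k−1}, b_2,…,b_{k−1}, c_1,…,c_{k−1}, d_1,…,d_{k−1} are pairwise distinct and induce the Kelly example 𝒦_k as a subposet. -/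
/-!
Every element `x` of the configuration lies above `a_j` for all `j` in an explicit set `L(x)`
and below `b_j` for all `j` in an explicit set `U(x)`. Since `a_j ≰ b_j`, `x ≤ y` in `P` forces
`L(x) ∩ U(y) = ∅`. Conversely, whenever `L(x) ∩ U(y) = ∅`, the relation `x ≤ y` holds in `𝒦_k`,
and the generating relations of `𝒦_k` hold in `P` by (1) and (2). So the three relations
coincide, and injectivity follows because `L(x) ∩ U(y) = L(y) ∩ U(x) = ∅` only for `x = y`.
-/

theorem monotoneOn_nat_Icc_of_le_succ {α : Type*} [Preorder α] {f : ℕ → α} {m n : ℕ}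
    (hf : ∀ i ∈ Set.Ico m n, f i ≤ f (i + 1)) : MonotoneOn f (Set.Icc m n) := by
  rintro i ⟨hmi, -⟩ j ⟨-, hjn⟩ hij
  induction j, hij using Nat.le_induction with
  | base => exact le_rfl
  | succ j hij ih => exact (ih (by omega)).trans (hf j ⟨by omega, by omega⟩)

theorem antitoneOn_nat_Icc_of_succ_le {α : Type*} [Preorder α] {f : ℕ → α} {m n : ℕ}
    (hf : ∀ i ∈ Set.Ico m n, f (i + 1) ≤ f i) : AntitoneOn f (Set.Icc m n) :=
  @monotoneOn_nat_Icc_of_le_succ αᵒᵈ _ f m n hf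

def kellySubscript {k : ℕ} : KellyIdx k → ℕ
  | Sum.inl (Sum.inl m) | Sum.inl (Sum.inr m) => (m : ℕ) + 2
  | Sum.inr (Sum.inl i) | Sum.inr (Sum.inr i) => (i : ℕ) + 1

/-- The indices `j ∈ [1, k]` for which `a_j ≤ x` (for `kellyLow`), resp. `x ≤ b_j` (for
`kellyUp`), is forced by (1) and (2). The outer witnesses `a_1, b_1, a_k, b_k`, which are not
elements of `𝒦_k`, take part. -/
def kellyLow (k : ℕ) : KellyIdx k → Set ℕ
  | Sum.inl (Sum.inl m) => {(m : ℕ) + 2}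
  | Sum.inl (Sum.inr m) => Set.Icc 1 k \ {(m : ℕ) + 2}
  | Sum.inr (Sum.inl i) => Set.Icc 1 ((i : ℕ) + 1)
  | Sum.inr (Sum.inr i) => Set.Icc ((i : ℕ) + 2) k

def kellyUp (k : ℕ) : KellyIdx k → Set ℕ
  | Sum.inl (Sum.inl m) => Set.Icc 1 k \ {(m : ℕ) + 2}
  | Sum.inl (Sum.inr m) => {(m : ℕ) + 2}
  | Sum.inr (Sum.inl i) => Set.Icc ((i : ℕ) + 2) k
  | Sum.inr (Sum.inr i) => Set.Icc 1 ((i : ℕ) + 1)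

theorem kellyLow_subset_Icc {k : ℕ} (p : KellyIdx k) : kellyLow k p ⊆ Set.Icc 1 k := by
  intro j hj
  rcases p with (m | m) | (i | i) <;>
    simp only [kellyLow, Set.mem_Icc, Set.mem_sdiff, Set.mem_singleton_iff] at hj ⊢ <;> omega

section KellyOrder

variable {k : ℕ}

theorem kellyLE_of_eq_or_kellyGen {p q : KellyIdx k} (h : p = q ∨ kellyGen k p q) :
    kellyLE k p q :=
  h.elim (fun h ↦ h ▸ .refl) .single

/-- `a_i < b_j` through `c_i` if `i < j` and through `d_{i-1}` if `i > j`. -/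
theorem kellyLE_inl_inr_of_ne {m n : Fin (k - 2)} (hmn : m ≠ n) :
    kellyLE k (Sum.inl (Sum.inl m)) (Sum.inl (Sum.inr n)) := by
  rcases Fin.lt_or_lt_of_ne hmn with hlt | hgt
  · have hac : kellyGen k (Sum.inl (Sum.inl m)) (Sum.inr (Sum.inl ⟨m + 1, by omega⟩)) := le_rfl
    have hcb : kellyGen k (Sum.inr (Sum.inl ⟨m + 1, by omega⟩)) (Sum.inl (Sum.inr n)) := hlt
    exact .head hac (.single hcb)
  · have had : kellyGen k (Sum.inl (Sum.inl m)) (Sum.inr (Sum.inr ⟨m, by omega⟩)) := le_rfl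
    have hdb : kellyGen k (Sum.inr (Sum.inr ⟨m, by omega⟩)) (Sum.inl (Sum.inr n)) := hgt
    exact .head had (.single hdb)

theorem kellyLE_of_disjoint {p q : KellyIdx k} (h : Disjoint (kellyLow k p) (kellyUp k q)) :
    kellyLE k p q := by
  rw [Set.disjoint_left] at h
  -- if the two sets meet, they meet in `1`, in `k` or in the subscript of `p` or of `q`
  have h₁ := @h 1
  have hₖ := @h k
  have hp := @h (kellySubscript p)
  have hq := @h (kellySubscript q)
  rcases p with (m | m) | (m | m) <;> rcases q with (n | n) | (n | n) <;>
    have := m.isLt <;> have := n.isLt <;>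
    simp only [kellySubscript, kellyLow, kellyUp, Set.mem_Icc, Set.mem_sdiff,
      Set.mem_singleton_iff, imp_false, true_implies, not_true_eq_false, and_false,
      not_false_eq_true] at h₁ hₖ hp hq <;>
    first
    | exact kellyLE_inl_inr_of_ne fun hmn ↦ by subst hmn; omega
    | exact kellyLE_of_eq_or_kellyGen (by
        simp only [kellyGen, reduceCtorEq, Sum.inl.injEq, Sum.inr.injEq, Fin.ext_iff, or_false,
          false_or]
        omega)

theorem eq_of_disjoint_kellyLow_kellyUp {p q : KellyIdx k}
    (hpq : Disjoint (kellyLow k p) (kellyUp k q)) (hqp : Disjoint (kellyLow k q) (kellyUp k p)) :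
    p = q := by
  rw [Set.disjoint_left] at hpq hqp
  have h₁ := @hpq 1
  have hₖ := @hpq k
  have hp := @hpq (kellySubscript p)
  have hq := @hpq (kellySubscript q)
  have h₁' := @hqp 1
  have hₖ' := @hqp k
  have hp' := @hqp (kellySubscript p)
  have hq' := @hqp (kellySubscript q)
  rcases p with (m | m) | (m | m) <;> rcases q with (n | n) | (n | n) <;>
    have := m.isLt <;> have := n.isLt <;>
    simp only [kellySubscript, kellyLow, kellyUp, Set.mem_Icc, Set.mem_sdiff,
      Set.mem_singleton_iff, imp_false, true_implies, not_true_eq_false, and_false,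
      not_false_eq_true] at h₁ hₖ hp hq h₁' hₖ' hp' hq' <;>
    simp only [reduceCtorEq, Sum.inl.injEq, Sum.inr.injEq, Fin.ext_iff] <;>
    omega

end KellyOrder

structure KellyWitnesses {P : Type*} [Preorder P] (k : ℕ) (a b c d : ℕ → P) : Prop where
  a_le_c : ∀ j ∈ Set.Icc 1 (k - 1), a j ≤ c j
  c_le_b : ∀ j ∈ Set.Icc 1 (k - 1), c j ≤ b (j + 1)
  d_le_b : ∀ j ∈ Set.Icc 1 (k - 1), d j ≤ b j
  a_le_d : ∀ j ∈ Set.Icc 1 (k - 1), a (j + 1) ≤ d j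
  c_le_c : ∀ j ∈ Set.Ico 1 (k - 1), c j ≤ c (j + 1)
  d_le_d : ∀ j ∈ Set.Ico 1 (k - 1), d (j + 1) ≤ d j

def kellyEmbedding {P : Type*} {k : ℕ} (a b c d : ℕ → P) : KellyIdx k → P
  | Sum.inl (Sum.inl m) => a ((m : ℕ) + 2)
  | Sum.inl (Sum.inr m) => b ((m : ℕ) + 2)
  | Sum.inr (Sum.inl i) => c ((i : ℕ) + 1)
  | Sum.inr (Sum.inr i) => d ((i : ℕ) + 1)

namespace KellyWitnesses

variable {P : Type*} [Preorder P] {k : ℕ} {a b c d : ℕ → P}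

theorem c_monotoneOn (hw : KellyWitnesses k a b c d) : MonotoneOn c (Set.Icc 1 (k - 1)) :=
  monotoneOn_nat_Icc_of_le_succ hw.c_le_c

theorem d_antitoneOn (hw : KellyWitnesses k a b c d) : AntitoneOn d (Set.Icc 1 (k - 1)) :=
  antitoneOn_nat_Icc_of_succ_le hw.d_le_d

theorem a_le_c_of_le (hw : KellyWitnesses k a b c d) {m i : ℕ} (hm : 1 ≤ m) (hmi : m ≤ i)
    (hi : i ≤ k - 1) : a m ≤ c i :=
  (hw.a_le_c m ⟨hm, by omega⟩).trans (hw.c_monotoneOn ⟨hm, by omega⟩ ⟨by omega, hi⟩ hmi)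

theorem c_le_b_of_lt (hw : KellyWitnesses k a b c d) {i j : ℕ} (hi : 1 ≤ i) (hij : i < j)
    (hj : j ≤ k) : c i ≤ b j := by
  obtain ⟨j, rfl⟩ : ∃ j', j = j' + 1 := ⟨j - 1, by omega⟩
  exact (hw.c_monotoneOn ⟨hi, by omega⟩ ⟨by omega, by omega⟩ (by omega)).trans
    (hw.c_le_b j ⟨by omega, by omega⟩)

theorem a_le_d_of_lt (hw : KellyWitnesses k a b c d) {i m : ℕ} (hi : 1 ≤ i) (him : i < m)
    (hm : m ≤ k) : a m ≤ d i := by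
  obtain ⟨m, rfl⟩ : ∃ m', m = m' + 1 := ⟨m - 1, by omega⟩
  exact (hw.a_le_d m ⟨by omega, by omega⟩).trans
    (hw.d_antitoneOn ⟨hi, by omega⟩ ⟨by omega, by omega⟩ (by omega))

theorem d_le_b_of_le (hw : KellyWitnesses k a b c d) {i j : ℕ} (hj : 1 ≤ j) (hji : j ≤ i)
    (hi : i ≤ k - 1) : d i ≤ b j :=
  (hw.d_antitoneOn ⟨hj, by omega⟩ ⟨by omega, hi⟩ hji).trans (hw.d_le_b j ⟨hj, by omega⟩)

theorem a_le_b_of_ne (hw : KellyWitnesses k a b c d) {m j : ℕ} (hm : 1 ≤ m) (hmk : m ≤ k)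
    (hj : 1 ≤ j) (hjk : j ≤ k) (hmj : m ≠ j) : a m ≤ b j := by
  rcases hmj.lt_or_gt with hlt | hgt
  · exact (hw.a_le_c_of_le hm le_rfl (by omega)).trans (hw.c_le_b_of_lt hm hlt hjk)
  · exact (hw.a_le_d_of_lt hj hgt hmk).trans (hw.d_le_b_of_le hj le_rfl (by omega))

theorem le_kellyEmbedding_of_mem_kellyLow (hw : KellyWitnesses k a b c d) {p : KellyIdx k}
    {j : ℕ} (hj : j ∈ kellyLow k p) : a j ≤ kellyEmbedding a b c d p := by
  rcases p with (m | m) | (m | m) <;>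
    simp only [kellyLow, Set.mem_Icc, Set.mem_sdiff, Set.mem_singleton_iff] at hj
  · exact hj ▸ le_rfl
  · exact hw.a_le_b_of_ne hj.1.1 hj.1.2 (by omega) (by omega) hj.2
  · exact hw.a_le_c_of_le hj.1 hj.2 (by omega)
  · exact hw.a_le_d_of_lt (by omega) (by omega) hj.2

theorem kellyEmbedding_le_of_mem_kellyUp (hw : KellyWitnesses k a b c d) {q : KellyIdx k}
    {j : ℕ} (hj : j ∈ kellyUp k q) : kellyEmbedding a b c d q ≤ b j := by
  rcases q with (m | m) | (m | m) <;>
    simp only [kellyUp, Set.mem_Icc, Set.mem_sdiff, Set.mem_singleton_iff] at hj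
  · exact hw.a_le_b_of_ne (by omega) (by omega) hj.1.1 hj.1.2 (Ne.symm hj.2)
  · exact hj ▸ le_rfl
  · exact hw.c_le_b_of_lt (by omega) (by omega) hj.2
  · exact hw.d_le_b_of_le hj.1 (by omega) (by omega)

theorem disjoint_kellyLow_kellyUp_of_le (hw : KellyWitnesses k a b c d)
    (hab : ∀ j, 1 ≤ j → j ≤ k → ¬ a j ≤ b j) {p q : KellyIdx k}
    (hpq : kellyEmbedding a b c d p ≤ kellyEmbedding a b c d q) :
    Disjoint (kellyLow k p) (kellyUp k q) :=
  Set.disjoint_left.2 fun j hp hq ↦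
    have hj := kellyLow_subset_Icc p hp
    hab j hj.1 hj.2 ((hw.le_kellyEmbedding_of_mem_kellyLow hp).trans
      (hpq.trans (hw.kellyEmbedding_le_of_mem_kellyUp hq)))

theorem kellyEmbedding_le_of_kellyGen (hw : KellyWitnesses k a b c d) {p q : KellyIdx k}
    (h : kellyGen k p q) : kellyEmbedding a b c d p ≤ kellyEmbedding a b c d q := by
  rcases p with (m | m) | (i | i) <;> rcases q with (n | n) | (j | j) <;>
    simp only [kellyGen] at h
  · exact hw.a_le_c_of_le (by omega) (by omega) (by omega)
  · exact hw.a_le_d_of_lt (by omega) (by omega) (by omega)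
  · exact hw.c_le_b_of_lt (by omega) (by omega) (by omega)
  · exact hw.c_monotoneOn ⟨by omega, by omega⟩ ⟨by omega, by omega⟩ (by omega)
  · exact hw.d_le_b_of_le (by omega) (by omega) (by omega)
  · exact hw.d_antitoneOn ⟨by omega, by omega⟩ ⟨by omega, by omega⟩ (by omega)

theorem kellyEmbedding_le_of_kellyLE (hw : KellyWitnesses k a b c d) {p q : KellyIdx k}
    (h : kellyLE k p q) : kellyEmbedding a b c d p ≤ kellyEmbedding a b c d q := by
  induction h with
  | refl => exact le_rfl
  | tail _ hgen ih => exact ih.trans (hw.kellyEmbedding_le_of_kellyGen hgen)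

theorem kellyLE_iff_kellyEmbedding_le (hw : KellyWitnesses k a b c d)
    (hab : ∀ j, 1 ≤ j → j ≤ k → ¬ a j ≤ b j) {p q : KellyIdx k} :
    kellyLE k p q ↔ kellyEmbedding a b c d p ≤ kellyEmbedding a b c d q :=
  ⟨hw.kellyEmbedding_le_of_kellyLE,
    fun h ↦ kellyLE_of_disjoint (hw.disjoint_kellyLow_kellyUp_of_le hab h)⟩

theorem kellyEmbedding_injective (hw : KellyWitnesses k a b c d)
    (hab : ∀ j, 1 ≤ j → j ≤ k → ¬ a j ≤ b j) :
    Function.Injective (kellyEmbedding (k := k) a b c d) := fun _ _ h ↦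
  eq_of_disjoint_kellyLow_kellyUp (hw.disjoint_kellyLow_kellyUp_of_le hab h.le)
    (hw.disjoint_kellyLow_kellyUp_of_le hab h.ge)

end KellyWitnesses

theorem kelly_from_witnesses_general (k : ℕ) (P : Type) [PartialOrder P]
    (a b c d : ℕ → P)
    (h1 : ∀ j, 1 ≤ j → j ≤ k - 1 →
      a j ≤ c j ∧ c j ≤ b (j + 1) ∧ d j ≤ b j ∧ a (j + 1) ≤ d j)
    (h2 : ∀ j, 1 ≤ j → j ≤ k - 2 → c j ≤ c (j + 1) ∧ d (j + 1) ≤ d j)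
    (h3 : ∀ j, 1 ≤ j → j ≤ k → ¬ a j ≤ b j) :
    ∃ φ : KellyIdx k → P, Function.Injective φ ∧
      (∀ p q, kellyLE k p q ↔ φ p ≤ φ q) ∧
      (∀ i : Fin (k - 2), φ (Sum.inl (Sum.inl i)) = a ((i : ℕ) + 2)) ∧
      (∀ i : Fin (k - 2), φ (Sum.inl (Sum.inr i)) = b ((i : ℕ) + 2)) ∧
      (∀ i : Fin (k - 1), φ (Sum.inr (Sum.inl i)) = c ((i : ℕ) + 1)) ∧
      (∀ i : Fin (k - 1), φ (Sum.inr (Sum.inr i)) = d ((i : ℕ) + 1)) := by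
  have hw : KellyWitnesses k a b c d :=
    { a_le_c := fun j ⟨hj₁, hj₂⟩ ↦ (h1 j hj₁ hj₂).1
      c_le_b := fun j ⟨hj₁, hj₂⟩ ↦ (h1 j hj₁ hj₂).2.1
      d_le_b := fun j ⟨hj₁, hj₂⟩ ↦ (h1 j hj₁ hj₂).2.2.1
      a_le_d := fun j ⟨hj₁, hj₂⟩ ↦ (h1 j hj₁ hj₂).2.2.2
      c_le_c := fun j ⟨hj₁, hj₂⟩ ↦ (h2 j hj₁ (by omega)).1
      d_le_d := fun j ⟨hj₁, hj₂⟩ ↦ (h2 j hj₁ (by omega)).2 }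
  exact ⟨kellyEmbedding a b c d, hw.kellyEmbedding_injective h3,
    fun _ _ ↦ hw.kellyLE_iff_kellyEmbedding_le h3, fun _ ↦ rfl, fun _ ↦ rfl, fun _ ↦ rfl,
    fun _ ↦ rfl⟩

theorem kelly_from_witnesses (k : ℕ) (hk : 3 ≤ k) (P : Type) [PartialOrder P]
    (a b c d : ℕ → P)
    (h1 : ∀ j, 1 ≤ j → j ≤ k - 1 →
      a j ≤ c j ∧ c j ≤ b (j + 1) ∧ d j ≤ b j ∧ a (j + 1) ≤ d j)
    (h2 : ∀ j, 1 ≤ j → j ≤ k - 2 → c j ≤ c (j + 1) ∧ d (j + 1) ≤ d j)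
    (h3 : ∀ j, 1 ≤ j → j ≤ k → ¬ a j ≤ b j) :
    ∃ φ : KellyIdx k → P, Function.Injective φ ∧
      (∀ p q, kellyLE k p q ↔ φ p ≤ φ q) ∧
      (∀ i : Fin (k - 2), φ (Sum.inl (Sum.inl i)) = a ((i : ℕ) + 2)) ∧
      (∀ i : Fin (k - 2), φ (Sum.inl (Sum.inr i)) = b ((i : ℕ) + 2)) ∧
      (∀ i : Fin (k - 1), φ (Sum.inr (Sum.inl i)) = c ((i : ℕ) + 1)) ∧
      (∀ i : Fin (k - 1), φ (Sum.inr (Sum.inr i)) = d ((i : ℕ) + 1)) :=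
  kelly_from_witnesses_general k P a b c d h1 h2 h3
end

section
/- Let (X,≤) be a finite poset with |X| ≥ 2, let (T,B) be a tree decomposition of its cover graph of width t−1 such that T is a binary tree with leaf set X and x ∈ B(x) for every x ∈ X, and fix enumerations B(u) = {z^u_1,…,z^u_t} of the bags (repeating elements if |B(u)| < t, and with z^x_1 = x for each x ∈ X). Consider the associated NLC-decomposition with label set Q = 2^{[t]} × 2^{[t]} described in the context. Then for every node v of T and every x ∈ X∖X(v): L≤(x,v) = {(π^≥,π^≤) ∈ Q : there is j ∈ π^≤ with x ≤ z^v_j} and L≥(x,v) = {(π^≥,π^≤) ∈ Q : there is j ∈ π^≥ with x ≥ z^v_j}. -/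
/-!
Let `u` be the lowest common ancestor of `x` and `v`. Unwinding the relabelings, `ℓ(u,x)` records
which `z^u_i` lie above and below `x`, so `γ ∈ L≤(x,v)` iff `x ≤ z^u_i ≤ z^v_j` for some `i` and
some `j ∈ γ^≤`. Conversely, if `x ≤ z^v_j`, a chain of covers from `x` to `z^v_j` runs along edges
of the cover graph, each contained in a bag. The chain starts in a bag outside the subtree of `v`'s
side of `u` and ends inside it, and `B(u)` separates the two, so some element of the chain is a
`z^u_i`. `L≥` is the order dual.
-/

theorem lcp_prefix_left (p q : List Bool) : lcp p q <+: p := by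
  fun_induction lcp p q <;> simp_all [List.cons_prefix_cons]

theorem lcp_prefix_right (p q : List Bool) : lcp p q <+: q := by
  fun_induction lcp p q <;> simp_all [List.cons_prefix_cons]

theorem prefix_lcp {l p q : List Bool} (hp : l <+: p) (hq : l <+: q) : l <+: lcp p q := by
  induction l generalizing p q with
  | nil => exact List.nil_prefix
  | cons a l ih =>
    obtain ⟨_ | ⟨b, p⟩⟩ := p <;> obtain ⟨_ | ⟨c, q⟩⟩ := q <;> simp_all [lcp, List.cons_prefix_cons]

theorem lcp_prefix_of_not_prefix {u p q : List Bool} {c : Bool}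
    (hp : ¬ u ++ [c] <+: p) (hq : u ++ [c] <+: q) : lcp p q <+: u := by
  have hlcp : ¬ u ++ [c] <+: lcp p q := fun h => hp (h.trans (lcp_prefix_left p q))
  rcases List.prefix_or_prefix_of_prefix (lcp_prefix_right p q) hq with h | h
  · exact (List.prefix_concat_iff.mp h).resolve_left fun h' => hlcp (h' ▸ List.prefix_rfl)
  · exact absurd h hlcp

theorem exists_lcp_append_prefix {p v : List Bool} (h : ¬ v <+: p) :
    ∃ c, lcp p v ++ [c] <+: v ∧ ¬ lcp p v ++ [c] <+: p := by
  obtain ⟨_ | ⟨c, s⟩, hs⟩ := lcp_prefix_right p v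
  · exact absurd (hs ▸ by simpa using lcp_prefix_left p v) h
  · refine ⟨c, ⟨s, by simpa using hs⟩, fun hc => ?_⟩
    have := (prefix_lcp hc ⟨s, by simpa using hs⟩).length_le
    simp at this

theorem BTree.subtreeAt_append_s17 {X : Type*} (t : BTree X) (p q : List Bool) :
    t.subtreeAt (p ++ q) = (t.subtreeAt p).bind (·.subtreeAt q) := by
  induction p generalizing t with
  | nil => rfl
  | cons b p ih => cases t <;> simp [BTree.subtreeAt, ih]

theorem BTree.eq_of_subtreeAt_eq_leaf_of_prefix {X : Type*} {t : BTree X} {p q : List Bool}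
    {x : X} (hp : t.subtreeAt p = some (leaf x)) (hq : t.IsPos q) (hpq : p <+: q) : p = q := by
  obtain ⟨_ | ⟨c, s⟩, rfl⟩ := hpq
  · simp
  · simp [BTree.IsPos, BTree.subtreeAt_append_s17, hp, BTree.subtreeAt] at hq

theorem CovBy.coverAdjOf {X : Type*} [PartialOrder X] {a b : X} (h : a ⋖ b) :
    coverAdjOf (· ≤ ·) a b :=
  ⟨h.ne, h.le, fun _ hac hcb => h.eq_or_eq hac hcb⟩

/-- `a ≤ b` is a chain of covers, each lying in a bag; where the chain crosses from bags outside `S`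
to bags inside `S`, it passes through the separator `W`. -/
theorem exists_mem_between_of_le {X ι : Type*} [PartialOrder X] [LocallyFiniteOrder X]
    {bag : ι → Set X} {S : ι → Prop} {W : Set X}
    (hcover : ∀ a b, a ⋖ b → ∃ p, a ∈ bag p ∧ b ∈ bag p)
    (hsep : ∀ w p q, w ∈ bag p → w ∈ bag q → ¬ S p → S q → w ∈ W)
    {a b : X} (hab : a ≤ b) {p q : ι} (hap : a ∈ bag p) (hp : ¬ S p) (hbq : b ∈ bag q)
    (hq : S q) : ∃ w ∈ W, a ≤ w ∧ w ≤ b := by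
  induction le_iff_reflTransGen_covBy.mp hab using Relation.ReflTransGen.head_induction_on
    generalizing p with
  | refl => exact ⟨b, hsep b p q hap hbq hp hq, le_rfl, le_rfl⟩
  | head hac hcb ih =>
    obtain ⟨r, har, hcr⟩ := hcover _ _ hac
    have hcb := le_iff_reflTransGen_covBy.mpr hcb
    by_cases hr : S r
    · exact ⟨_, hsep _ p r hap har hp hr, le_rfl, hac.le.trans hcb⟩
    · obtain ⟨w, hw, hcw, hwb⟩ := ih hcb hcr hr
      exact ⟨w, hw, hac.le.trans hcw, hwb⟩

def BagsPathConnected {X : Type*} (Pos : List Bool → Prop) (bag : List Bool → Set X) : Prop :=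
  ∀ x p q r, Pos p → Pos q → x ∈ bag p → x ∈ bag q →
    lcp p q <+: r → (r <+: p ∨ r <+: q) → x ∈ bag r

namespace BagsPathConnected

variable {X : Type*} {Pos : List Bool → Prop} {bag : List Bool → Set X}

theorem mem_of_separated (h : BagsPathConnected Pos bag) {u p q : List Bool} {c : Bool} {w : X}
    (hp : Pos p) (hq : Pos q) (hwp : w ∈ bag p) (hwq : w ∈ bag q)
    (hpu : ¬ u ++ [c] <+: p) (hqu : u ++ [c] <+: q) : w ∈ bag u :=
  h w p q u hp hq hwp hwq (lcp_prefix_of_not_prefix hpu hqu)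
    (Or.inr ((List.prefix_append u [c]).trans hqu))

theorem exists_mem_between [PartialOrder X] [LocallyFiniteOrder X]
    (h : BagsPathConnected Pos bag) (hcover : ∀ a b, a ⋖ b → ∃ p, Pos p ∧ a ∈ bag p ∧ b ∈ bag p)
    {u p q : List Bool} {c : Bool} {a b : X} (hab : a ≤ b) (hp : Pos p) (hq : Pos q)
    (ha : a ∈ bag p) (hb : b ∈ bag q) (hpq : ¬ (u ++ [c] <+: p ↔ u ++ [c] <+: q)) :
    ∃ w ∈ bag u, a ≤ w ∧ w ≤ b := by
  let bag' : {p // Pos p} → Set X := fun p => bag p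
  have hcover' : ∀ a b, a ⋖ b → ∃ p, a ∈ bag' p ∧ b ∈ bag' p := fun a b hab => by
    obtain ⟨p, hp, ha, hb⟩ := hcover a b hab
    exact ⟨⟨p, hp⟩, ha, hb⟩
  by_cases hpu : u ++ [c] <+: p
  · refine exists_mem_between_of_le (S := fun r => ¬ u ++ [c] <+: r.1) hcover'
      (fun w r s hwr hws hr hs => ?_) hab (p := ⟨p, hp⟩) (q := ⟨q, hq⟩) ha (not_not.mpr hpu) hb
      (by tauto)
    exact h.mem_of_separated s.2 r.2 hws hwr hs (not_not.mp hr)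
  · exact exists_mem_between_of_le (S := fun r => u ++ [c] <+: r.1) hcover'
      (fun w r s hwr hws hr hs => h.mem_of_separated r.2 s.2 hwr hws hr hs) hab
      (p := ⟨p, hp⟩) (q := ⟨q, hq⟩) ha hpu hb (by tauto)

end BagsPathConnected

namespace NLCDecomp

variable {X ι : Type*} [PartialOrder X] [Fintype X] {D : NLCDecomp X (Set ι × Set ι)}

theorem Lle_eq_of_status (hR : ∀ u, D.R u = { αβ | ∃ i, i ∈ αβ.1.1 ∧ i ∈ αβ.2.2 })
    (hR' : ∀ u, D.R' u = { αβ | ∃ i, i ∈ αβ.1.2 ∧ i ∈ αβ.2.1 }) (x : X) (v : List Bool) :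
    D.Lle x v = { γ | ∃ i, i ∈ (D.lab (lcp (D.pos x) v) x).1 ∧
      i ∈ (D.rel (lcp (D.pos x) v) v γ).2 } := by
  ext γ
  by_cases hside : lcp (D.pos x) v ++ [false] <+: D.pos x <;>
    simp [Lle, hR, hR', hside, and_comm]

theorem Lge_eq_of_status (hR : ∀ u, D.R u = { αβ | ∃ i, i ∈ αβ.1.1 ∧ i ∈ αβ.2.2 })
    (hR' : ∀ u, D.R' u = { αβ | ∃ i, i ∈ αβ.1.2 ∧ i ∈ αβ.2.1 }) (x : X) (v : List Bool) :
    D.Lge x v = { γ | ∃ i, i ∈ (D.lab (lcp (D.pos x) v) x).2 ∧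
      i ∈ (D.rel (lcp (D.pos x) v) v γ).1 } := by
  ext γ
  by_cases hside : lcp (D.pos x) v ++ [false] <+: D.pos x <;>
    simp [Lge, hR, hR', hside, and_comm]

end NLCDecomp

theorem NLCDecomp.lab_eq_of_bag {X : Type*} [PartialOrder X] [Fintype X] {t : ℕ}
    {D : NLCDecomp X (Set (Fin t) × Set (Fin t))} {z : List Bool → Fin t → X} {x : X}
    {u : List Bool} {i₀ : Fin t} (hx : z (D.pos x) i₀ = x)
    (hinit : D.init x = ({ i | x ≤ z (D.pos x) i }, { i | z (D.pos x) i ≤ x }))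
    (hrel : ∀ π : Set (Fin t) × Set (Fin t), D.rel u (D.pos x) π =
      ({ i | ∃ j ∈ π.1, z (D.pos x) j ≤ z u i }, { i | ∃ j ∈ π.2, z u i ≤ z (D.pos x) j }))
    (hu : u ≠ D.pos x) :
    D.lab u x = ({ i | x ≤ z u i }, { i | z u i ≤ x }) := by
  simp only [NLCDecomp.lab, if_neg hu, hrel, hinit, Prod.mk.injEq]
  constructor <;> ext i
  · exact ⟨fun ⟨_, hxj, hju⟩ => hxj.trans hju, fun hxu => ⟨i₀, hx.ge, hx.le.trans hxu⟩⟩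
  · exact ⟨fun ⟨_, hjx, huj⟩ => huj.trans hjx, fun hux => ⟨i₀, hx.le, hux.trans hx.ge⟩⟩

theorem exists_le_and_exists_le_iff {α ι κ : Type*} [Preorder α] {a : α} {f : ι → α}
    {g : κ → α} {s : Set κ} (h : ∀ j, a ≤ g j → ∃ w ∈ Set.range f, a ≤ w ∧ w ≤ g j) :
    (∃ i, a ≤ f i ∧ ∃ j ∈ s, f i ≤ g j) ↔ ∃ j ∈ s, a ≤ g j := by
  refine ⟨fun ⟨_, hai, j, hj, hij⟩ => ⟨j, hj, hai.trans hij⟩, fun ⟨j, hj, haj⟩ => ?_⟩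
  obtain ⟨_, ⟨i, rfl⟩, hai, hij⟩ := h j haj
  exact ⟨i, hai, j, hj, hij⟩

theorem L_sets_of_treewidth_decomp_general (t : ℕ) (ht : 1 ≤ t)
    (X : Type) [PartialOrder X] [Fintype X]
    (z : List Bool → Fin t → X)
    (D : NLCDecomp X (Set (Fin t) × Set (Fin t)))
    (hbagmem : ∀ x : X, z (D.pos x) ⟨0, ht⟩ = x)
    (hconn : ∀ x : X, ∀ p q r : List Bool, D.tree.IsPos p → D.tree.IsPos q →
      (∃ i, z p i = x) → (∃ i, z q i = x) →
      lcp p q <+: r → (r <+: p ∨ r <+: q) → ∃ i, z r i = x)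
    (hedge : ∀ x y : X, (coverGraphOf ((· ≤ ·) : X → X → Prop)).Adj x y →
      ∃ p, D.tree.IsPos p ∧ (∃ i, z p i = x) ∧ (∃ j, z p j = y))
    (hinit : ∀ x : X, D.init x =
      ({ i | x ≤ z (D.pos x) i }, { i | z (D.pos x) i ≤ x }))
    (hrel : ∀ u v : List Bool, D.tree.IsPos v → u <+: v → u ≠ v →
      ∀ π : Set (Fin t) × Set (Fin t),
        D.rel u v π = ({ i | ∃ j ∈ π.1, z v j ≤ z u i }, { i | ∃ j ∈ π.2, z u i ≤ z v j }))
    (hR : ∀ u, D.R u = { αβ | ∃ i, i ∈ αβ.1.1 ∧ i ∈ αβ.2.2 })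
    (hR' : ∀ u, D.R' u = { αβ | ∃ i, i ∈ αβ.1.2 ∧ i ∈ αβ.2.1 }) :
    ∀ v : List Bool, D.tree.IsPos v → ∀ x : X, ¬ v <+: D.pos x →
      D.Lle x v = { π : Set (Fin t) × Set (Fin t) | ∃ j ∈ π.2, x ≤ z v j } ∧
      D.Lge x v = { π : Set (Fin t) × Set (Fin t) | ∃ j ∈ π.1, z v j ≤ x } := by
  classical
  let : LocallyFiniteOrder X := Fintype.toLocallyFiniteOrder
  intro v hv x hxv
  have hpath : BagsPathConnected D.tree.IsPos (fun p => Set.range (z p)) := hconn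
  have hcover a b (hab : a ⋖ b) := hedge a b (Or.inl hab.coverAdjOf)
  have hx : D.tree.IsPos (D.pos x) := by simp [BTree.IsPos, D.pos_spec x]
  rw [D.Lle_eq_of_status hR hR', D.Lge_eq_of_status hR hR']
  obtain ⟨c, hcv, hcx⟩ := exists_lcp_append_prefix hxv
  have hux := lcp_prefix_left (D.pos x) v
  generalize lcp (D.pos x) v = u at hcv hcx hux ⊢
  have huv : u <+: v := (List.prefix_append u [c]).trans hcv
  have huv' : u ≠ v := fun h => by simpa [← h] using hcv.length_le
  have hux' : u ≠ D.pos x := fun h =>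
    hxv (D.tree.eq_of_subtreeAt_eq_leaf_of_prefix (D.pos_spec x) hv (h ▸ huv) ▸ List.prefix_rfl)
  have hsides : ¬ (u ++ [c] <+: D.pos x ↔ u ++ [c] <+: v) := by tauto
  rw [NLCDecomp.lab_eq_of_bag (hbagmem x) (hinit x) (hrel u _ hx hux hux') hux']
  simp only [hrel u v hv huv huv']
  exact ⟨Set.ext fun γ => exists_le_and_exists_le_iff fun j hj =>
      hpath.exists_mem_between hcover hj hx hv ⟨_, hbagmem x⟩ ⟨j, rfl⟩ hsides,
    Set.ext fun γ => exists_le_and_exists_le_iff (α := Xᵒᵈ) fun j hj =>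
      (hpath.exists_mem_between hcover hj hv hx ⟨j, rfl⟩ ⟨_, hbagmem x⟩ (mt Iff.symm hsides)).imp
        fun _ ⟨hw, hjw, hwx⟩ => ⟨hw, hwx, hjw⟩⟩

theorem L_sets_of_treewidth_decomp (t : ℕ) (ht : 1 ≤ t)
    (X : Type) [PartialOrder X] [Fintype X] (hX : 2 ≤ Fintype.card X)
    (z : List Bool → Fin t → X)
    (D : NLCDecomp X (Set (Fin t) × Set (Fin t)))
    (hbagmem : ∀ x : X, z (D.pos x) ⟨0, ht⟩ = x)
    (hconn : ∀ x : X, ∀ p q r : List Bool, D.tree.IsPos p → D.tree.IsPos q →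
      (∃ i, z p i = x) → (∃ i, z q i = x) →
      lcp p q <+: r → (r <+: p ∨ r <+: q) → ∃ i, z r i = x)
    (hedge : ∀ x y : X, (coverGraphOf ((· ≤ ·) : X → X → Prop)).Adj x y →
      ∃ p, D.tree.IsPos p ∧ (∃ i, z p i = x) ∧ (∃ j, z p j = y))
    (hinit : ∀ x : X, D.init x =
      ({ i | x ≤ z (D.pos x) i }, { i | z (D.pos x) i ≤ x }))
    (hrel : ∀ u v : List Bool, D.tree.IsPos v → u <+: v → u ≠ v →
      ∀ π : Set (Fin t) × Set (Fin t),
        D.rel u v π = ({ i | ∃ j ∈ π.1, z v j ≤ z u i }, { i | ∃ j ∈ π.2, z u i ≤ z v j }))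
    (hR : ∀ u, D.R u = { αβ | ∃ i, i ∈ αβ.1.1 ∧ i ∈ αβ.2.2 })
    (hR' : ∀ u, D.R' u = { αβ | ∃ i, i ∈ αβ.1.2 ∧ i ∈ αβ.2.1 }) :
    ∀ v : List Bool, D.tree.IsPos v → ∀ x : X, ¬ v <+: D.pos x →
      D.Lle x v = { π : Set (Fin t) × Set (Fin t) | ∃ j ∈ π.2, x ≤ z v j } ∧
      D.Lge x v = { π : Set (Fin t) × Set (Fin t) | ∃ j ∈ π.1, z v j ≤ x } :=
  L_sets_of_treewidth_decomp_general t ht X z D hbagmem hconn hedge hinit hrel hR hR'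
end
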